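/- arXiv:2208.11193 — 5 statements merged into one kernel-verified Lean document; each statement's English description precedes it below -/
import Mathlib

section
/- The relation 'x is not separated from z' on a topological space is reflexive and symmetric, but there exists a (non-Hausdorff) 1-dimensional topological manifold on which it fails to be transitive. -/
/-!
In the quotient of three copies of `ℝ` that glues copy 0 to copy 1 along `t < 0` and copy 1 to
copy 2 along `t > 0`, each copy is an open chart. The origin of copy 1 is non-separated from
the other two origins, since two continuous maps agreeing on a set send each point of its
closure to non-separated points; but copies 0 and 2 have disjoint open images, so their origins
are separated.
-/

/-- Two points of a topological space are non-separated if every open neighborhood of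
one meets every open neighborhood of the other. -/
def NonSeparated {X : Type*} [TopologicalSpace X] (x z : X) : Prop :=
  ∀ U W : Set X, IsOpen U → IsOpen W → x ∈ U → z ∈ W → (U ∩ W).Nonempty

/-- A (possibly non-Hausdorff) 1-dimensional topological manifold. -/
def IsTopManifold1 (V : Type*) [TopologicalSpace V] : Prop :=
  ∀ x : V, ∃ U : Set V, IsOpen U ∧ x ∈ U ∧ Nonempty (U ≃ₜ ℝ)

open Filter Topology Set

section NonSeparated

variable {X : Type*} [TopologicalSpace X]

theorem nonSeparated_iff_not_disjoint_nhds {x z : X} :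
    NonSeparated x z ↔ ¬Disjoint (𝓝 x) (𝓝 z) := by
  rw [(nhds_basis_opens x).disjoint_iff (nhds_basis_opens z)]
  simp only [NonSeparated, not_exists, not_and, Set.not_disjoint_iff_nonempty_inter]
  grind

theorem nonSeparated_refl (x : X) : NonSeparated x x := by
  simpa [nonSeparated_iff_not_disjoint_nhds] using nhds_neBot.ne

theorem NonSeparated.symm {x z : X} (h : NonSeparated x z) : NonSeparated z x := by
  rwa [nonSeparated_iff_not_disjoint_nhds, disjoint_comm, ← nonSeparated_iff_not_disjoint_nhds]

theorem nonSeparated_of_eqOn_of_mem_closure {Y : Type*} [TopologicalSpace Y] {f g : Y → X}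
    {s : Set Y} {y : Y} (hfg : EqOn f g s) (hy : y ∈ closure s) (hf : ContinuousAt f y)
    (hg : ContinuousAt g y) : NonSeparated (f y) (g y) := by
  have := mem_closure_iff_nhdsWithin_neBot.1 hy
  rw [nonSeparated_iff_not_disjoint_nhds]
  intro hdisj
  have hf' : map f (𝓝[s] y) ≤ 𝓝 (f y) := hf.tendsto.mono_left nhdsWithin_le_nhds
  have hg' : map f (𝓝[s] y) ≤ 𝓝 (g y) := by
    rw [map_congr (eventuallyEq_nhdsWithin_of_eqOn hfg)]
    exact hg.tendsto.mono_left nhdsWithin_le_nhds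
  exact (map_neBot : NeBot (map f (𝓝[s] y))).ne (disjoint_self.1 (hdisj.mono hf' hg'))

end NonSeparated

theorem isTopManifold1_of_isOpenEmbedding {V ι : Type*} [TopologicalSpace V] {e : ι → ℝ → V}
    (he : ∀ i, IsOpenEmbedding (e i)) (hcover : ∀ x, ∃ i, x ∈ range (e i)) :
    IsTopManifold1 V := by
  intro x
  obtain ⟨i, hx⟩ := hcover x
  exact ⟨range (e i), (he i).isOpen_range, hx, ⟨(he i).toHomeomorph.symm⟩⟩

section Gluing

variable {ι Y V : Type*} [TopologicalSpace Y] [TopologicalSpace V] {q : (Σ _ : ι, Y) → V}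

theorem Topology.IsQuotientMap.isOpenEmbedding_comp_sigmaMk (hq : IsQuotientMap q)
    (hsnd : ∀ a b, q a = q b → a.2 = b.2) (hopen : ∀ i j, IsOpen {y | q ⟨i, y⟩ = q ⟨j, y⟩})
    (i : ι) : IsOpenEmbedding (fun y ↦ q ⟨i, y⟩) := by
  refine .of_continuous_injective_isOpenMap (hq.continuous.comp continuous_sigmaMk)
    (fun y y' h ↦ hsnd _ _ h) fun s hs ↦ ?_
  rw [← hq.isOpen_preimage, isOpen_sigma_iff]
  intro j
  have : Sigma.mk j ⁻¹' (q ⁻¹' ((fun y ↦ q ⟨i, y⟩) '' s)) = s ∩ {y | q ⟨i, y⟩ = q ⟨j, y⟩} := by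
    ext y
    constructor
    · rintro ⟨y', hy', h⟩
      obtain rfl : y' = y := hsnd _ _ h
      exact ⟨hy', h⟩
    · rintro ⟨hy, h⟩
      exact ⟨y, hy, h⟩
  rw [this]
  exact hs.inter (hopen i j)

end Gluing

noncomputable section

namespace BranchingLine

/-- Three copies of `ℝ`, the 0th and 1st glued along `t < 0`, the 1st and 2nd along `t > 0`:
`(t, i)` is identified with `(t, sheet i t)`. -/
def sheet : Fin 3 → ℝ → Fin 3
  | 0, t => if t < 0 then 1 else 0
  | 2, t => if 0 < t then 1 else 2
  | i, _ => i

theorem sheet_zero_ne_sheet_two (t : ℝ) : sheet 0 t ≠ sheet 2 t := by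
  simp only [sheet]; split_ifs <;> first | decide | linarith

theorem isOpen_setOf_sheet_eq (i j : Fin 3) : IsOpen {t | sheet i t = sheet j t} := by
  have h02 : {t | sheet 0 t = sheet 2 t} = ∅ := eq_empty_of_forall_notMem sheet_zero_ne_sheet_two
  fin_cases i <;> fin_cases j <;> simp [h02, eq_comm (b := sheet 0 _)] <;>
    simp [sheet, isOpen_lt', isOpen_gt']

def key (a : Σ _ : Fin 3, ℝ) : ℝ × Fin 3 := (a.2, sheet a.1 a.2)

def Space : Type := Quotient (Setoid.ker key)

instance : TopologicalSpace Space := instTopologicalSpaceQuotient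

def chart (i : Fin 3) (t : ℝ) : Space := Quotient.mk _ ⟨i, t⟩

theorem chart_eq_chart_iff {i j : Fin 3} {s t : ℝ} :
    chart i s = chart j t ↔ s = t ∧ sheet i s = sheet j t :=
  Quotient.eq.trans Prod.ext_iff

theorem isOpenEmbedding_chart (i : Fin 3) : IsOpenEmbedding (chart i) :=
  isQuotientMap_quotient_mk'.isOpenEmbedding_comp_sigmaMk
    (fun _ _ h ↦ (chart_eq_chart_iff.1 h).1)
    (fun i j ↦ by simpa [key] using isOpen_setOf_sheet_eq i j) i

theorem isTopManifold1 : IsTopManifold1 Space :=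
  isTopManifold1_of_isOpenEmbedding isOpenEmbedding_chart fun x ↦
    Quotient.inductionOn x fun ⟨i, t⟩ ↦ ⟨i, t, rfl⟩

theorem chart_zero_eq_chart_one {t : ℝ} (ht : t < 0) : chart 0 t = chart 1 t := by
  simp [chart_eq_chart_iff, sheet, ht]

theorem chart_one_eq_chart_two {t : ℝ} (ht : 0 < t) : chart 1 t = chart 2 t := by
  simp [chart_eq_chart_iff, sheet, ht]

theorem chart_zero_ne_chart_two (s t : ℝ) : chart 0 s ≠ chart 2 t := by
  intro h
  obtain ⟨rfl, h⟩ := chart_eq_chart_iff.1 h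
  exact sheet_zero_ne_sheet_two s h

theorem nonSeparated_chart_zero_chart_one : NonSeparated (chart 0 0) (chart 1 0) :=
  nonSeparated_of_eqOn_of_mem_closure (fun _ ↦ chart_zero_eq_chart_one)
    (by simp : (0 : ℝ) ∈ closure (Iio 0)) (isOpenEmbedding_chart 0).continuous.continuousAt
    (isOpenEmbedding_chart 1).continuous.continuousAt

theorem nonSeparated_chart_one_chart_two : NonSeparated (chart 1 0) (chart 2 0) :=
  nonSeparated_of_eqOn_of_mem_closure (fun _ ↦ chart_one_eq_chart_two)
    (by simp : (0 : ℝ) ∈ closure (Ioi 0)) (isOpenEmbedding_chart 1).continuous.continuousAt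
    (isOpenEmbedding_chart 2).continuous.continuousAt

theorem not_nonSeparated_chart_zero_chart_two : ¬NonSeparated (chart 0 0) (chart 2 0) := by
  intro h
  obtain ⟨_, ⟨s, rfl⟩, t, ht⟩ := h _ _ (isOpenEmbedding_chart 0).isOpen_range
    (isOpenEmbedding_chart 2).isOpen_range ⟨0, rfl⟩ ⟨0, rfl⟩
  exact chart_zero_ne_chart_two s t ht.symm

end BranchingLine

end

/-- The non-separation relation is reflexive and symmetric on every topological space,
but there is a (non-Hausdorff) 1-dimensional topological manifold on which it fails
to be transitive. -/
theorem nonSeparated_refl_symm_not_trans :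
    (∀ (X : Type) (_ : TopologicalSpace X),
      Reflexive (NonSeparated (X := X)) ∧ Symmetric (NonSeparated (X := X))) ∧
    ∃ (V : Type) (_ : TopologicalSpace V),
      IsTopManifold1 V ∧ ¬ Transitive (NonSeparated (X := V)) :=
  ⟨fun _ _ ↦ ⟨nonSeparated_refl, fun _ _ ↦ NonSeparated.symm⟩, BranchingLine.Space,
    inferInstance, BranchingLine.isTopManifold1, fun htrans ↦
      BranchingLine.not_nonSeparated_chart_zero_chart_two <| htrans
        BranchingLine.nonSeparated_chart_zero_chart_one
        BranchingLine.nonSeparated_chart_one_chart_two⟩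
end

section
/- The 'line with two origins' equipped with the two differentiable structures given by charts h₁(t) = t₁, h₂(t) = t₂ (first structure) and h₁(t) = t₁, h₂(t) = (t³)₂ i.e. transition map t ↦ t^{1/3} on (−∞,0) (second structure) are not diffeomorphic: there is no C^∞ homeomorphism with C^∞ inverse taking one structure to the other. -/
/-- The simple branching: glue two copies of `ℝ` along `t < 0`. -/
def branchRel : (ℝ ⊕ ℝ) → (ℝ ⊕ ℝ) → Prop :=
  fun a b => ∃ t : ℝ, t < 0 ∧ a = Sum.inl t ∧ b = Sum.inr t

/-- The simple branching (line with two origins at coordinate `0`, branching for `t ≥ 0`). -/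
def Branch : Type := Quot branchRel

instance : TopologicalSpace Branch := by unfold Branch; infer_instance

/-- Charts of the first differentiable structure: `h₁ t = t₁`, `h₂ t = t₂`. -/
def chartA : Bool → ℝ → Branch
  | true, t => Quot.mk _ (Sum.inl t)
  | false, t => Quot.mk _ (Sum.inr t)

/-- Charts of the second differentiable structure: `h₁ t = t₁`, `h₂ t = (t³)₂`,
so the transition map on `(-∞,0)` is `t ↦ t^(1/3)`. -/
def chartB : Bool → ℝ → Branch
  | true, t => Quot.mk _ (Sum.inl t)
  | false, t => Quot.mk _ (Sum.inr (t ^ 3))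

namespace BranchAux

noncomputable section
open Set Function Filter Topology

abbrev q : (ℝ ⊕ ℝ) → Branch := Quot.mk branchRel

lemma branch_eq_iff {a b : ℝ ⊕ ℝ} :
    q a = q b ↔ a = b ∨ branchRel a b ∨ branchRel b a := by
  constructor
  · intro h
    have h' := Quot.eq.1 h
    clear h
    induction h' with
    | rel x y hxy => exact Or.inr (Or.inl hxy)
    | refl x => exact Or.inl rfl
    | symm x y _ ih => tauto
    | trans x y z _ _ ih1 ih2 =>
      rcases ih1 with rfl | ⟨t, ht, rfl, rfl⟩ | ⟨t, ht, rfl, rfl⟩ <;>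
        rcases ih2 with rfl | ⟨s, hs, h1, h2⟩ | ⟨s, hs, h1, h2⟩ <;>
          simp_all [branchRel] <;> tauto
  · rintro (rfl | h | h)
    · rfl
    · exact Quot.sound h
    · exact (Quot.sound h).symm

lemma inl_eq_inl {a b : ℝ} : q (Sum.inl a) = q (Sum.inl b) ↔ a = b := by
  rw [branch_eq_iff]; simp [branchRel]

lemma inr_eq_inr {a b : ℝ} : q (Sum.inr a) = q (Sum.inr b) ↔ a = b := by
  rw [branch_eq_iff]; simp [branchRel]

lemma inl_eq_inr {a b : ℝ} : q (Sum.inl a) = q (Sum.inr b) ↔ a = b ∧ a < 0 := by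
  rw [branch_eq_iff]; constructor
  · rintro (h | ⟨t, ht, h1, h2⟩ | ⟨t, ht, h1, h2⟩) <;> simp_all [branchRel]
  · rintro ⟨rfl, h⟩; exact Or.inr (Or.inl ⟨a, h, rfl, rfl⟩)

lemma glue {t : ℝ} (ht : t < 0) : q (Sum.inl t) = q (Sum.inr t) :=
  Quot.sound ⟨t, ht, rfl, rfl⟩

lemma cube_surj (s : ℝ) : ∃ v : ℝ, v ^ 3 = s := by
  rcases le_or_gt 0 s with h | h
  · refine ⟨s ^ ((1:ℝ)/3), ?_⟩
    rw [← Real.rpow_natCast (s ^ ((1:ℝ)/3)) 3, ← Real.rpow_mul h]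
    norm_num
  · refine ⟨-((-s) ^ ((1:ℝ)/3)), ?_⟩
    rw [Odd.neg_pow (by decide), ← Real.rpow_natCast ((-s) ^ ((1:ℝ)/3)) 3,
      ← Real.rpow_mul (by linarith)]
    norm_num

lemma cube_inj : Function.Injective (fun v : ℝ => v ^ 3) :=
  (Odd.strictMono_pow (n := 3) (by decide)).injective

lemma chartA_def (i : Bool) (t : ℝ) :
    chartA i t = if i then q (Sum.inl t) else q (Sum.inr t) := by
  cases i <;> rfl

lemma chartA_inj (i : Bool) : Function.Injective (chartA i) := by
  intro a b h
  cases i <;> simp only [chartA, inl_eq_inl, inr_eq_inr] at h <;> exact h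

lemma chartB_inj (i : Bool) : Function.Injective (chartB i) := by
  intro a b h
  cases i <;> simp only [chartB, inl_eq_inl, inr_eq_inr] at h
  · exact cube_inj h
  · exact h

lemma invFun_chartA (i : Bool) (t : ℝ) : Function.invFun (chartA i) (chartA i t) = t :=
  Function.leftInverse_invFun (chartA_inj i) t

lemma invFun_chartB (i : Bool) (t : ℝ) : Function.invFun (chartB i) (chartB i t) = t :=
  Function.leftInverse_invFun (chartB_inj i) t

lemma chartA_glued {i : Bool} {s : ℝ} (hs : s < 0) : chartA i s = q (Sum.inl s) := by
  cases i
  · exact (glue hs).symm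
  · rfl

/-- Openness criterion for subsets of `Branch`. -/
lemma isOpen_branch_iff {U : Set Branch} :
    IsOpen U ↔ IsOpen {t : ℝ | q (Sum.inl t) ∈ U} ∧ IsOpen {t : ℝ | q (Sum.inr t) ∈ U} := by
  have h1 : IsOpen U ↔ IsOpen (q ⁻¹' U) := (isQuotientMap_quot_mk).isOpen_preimage.symm
  rw [h1, isOpen_sum_iff]
  rfl

lemma continuous_ql : Continuous (fun t : ℝ => q (Sum.inl t)) :=
  continuous_quot_mk.comp continuous_inl

lemma continuous_qr : Continuous (fun t : ℝ => q (Sum.inr t)) :=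
  continuous_quot_mk.comp continuous_inr

/-- image under the left chart -/
def Ul (s : Set ℝ) : Set Branch := (fun t => q (Sum.inl t)) '' s
def Ur (s : Set ℝ) : Set Branch := (fun t => q (Sum.inr t)) '' s

lemma isOpen_Ul {s : Set ℝ} (hs : IsOpen s) : IsOpen (Ul s) := by
  rw [isOpen_branch_iff]
  constructor
  · have : {t : ℝ | q (Sum.inl t) ∈ Ul s} = s := by
      ext t; simp only [Ul, mem_image, mem_setOf_eq]
      constructor
      · rintro ⟨t', ht', h⟩; rwa [inl_eq_inl.1 h.symm]
      · exact fun h => ⟨t, h, rfl⟩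
    rwa [this]
  · have : {t : ℝ | q (Sum.inr t) ∈ Ul s} = s ∩ Iio 0 := by
      ext t; simp only [Ul, mem_image, mem_setOf_eq, mem_inter_iff, mem_Iio]
      constructor
      · rintro ⟨t', ht', h⟩
        obtain ⟨rfl, h2⟩ := inl_eq_inr.1 h
        exact ⟨ht', h2⟩
      · rintro ⟨h1, h2⟩; exact ⟨t, h1, (glue h2)⟩
    rw [this]; exact hs.inter isOpen_Iio

lemma isOpen_Ur {s : Set ℝ} (hs : IsOpen s) : IsOpen (Ur s) := by
  rw [isOpen_branch_iff]
  constructor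
  · have : {t : ℝ | q (Sum.inl t) ∈ Ur s} = s ∩ Iio 0 := by
      ext t; simp only [Ur, mem_image, mem_setOf_eq, mem_inter_iff, mem_Iio]
      constructor
      · rintro ⟨t', ht', h⟩
        obtain ⟨rfl, h2⟩ := inl_eq_inr.1 h.symm
        exact ⟨ht', h2⟩
      · rintro ⟨h1, h2⟩; exact ⟨t, h1, (glue h2).symm⟩
    rw [this]; exact hs.inter isOpen_Iio
  · have : {t : ℝ | q (Sum.inr t) ∈ Ur s} = s := by
      ext t; simp only [Ur, mem_image, mem_setOf_eq]
      constructor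
      · rintro ⟨t', ht', h⟩; rwa [inr_eq_inr.1 h.symm]
      · exact fun h => ⟨t, h, rfl⟩
    rwa [this]

/-- From an open set containing an origin, extract negative glued points. -/
lemma exists_neg_inl {U : Set Branch} (hU : IsOpen U) (h0 : q (Sum.inl 0) ∈ U) :
    ∃ δ > (0:ℝ), ∀ t : ℝ, -δ < t → t < 0 → q (Sum.inl t) ∈ U := by
  have hopen : IsOpen {t : ℝ | q (Sum.inl t) ∈ U} := (isOpen_branch_iff.1 hU).1
  obtain ⟨δ, hδ, hball⟩ := Metric.isOpen_iff.1 hopen 0 h0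
  refine ⟨δ, hδ, fun t h1 h2 => hball ?_⟩
  simp [Real.ball_eq_Ioo] at *
  constructor <;> linarith

lemma exists_neg_inr {U : Set Branch} (hU : IsOpen U) (h0 : q (Sum.inr 0) ∈ U) :
    ∃ δ > (0:ℝ), ∀ t : ℝ, -δ < t → t < 0 → q (Sum.inr t) ∈ U := by
  have hopen : IsOpen {t : ℝ | q (Sum.inr t) ∈ U} := (isOpen_branch_iff.1 hU).2
  obtain ⟨δ, hδ, hball⟩ := Metric.isOpen_iff.1 hopen 0 h0
  refine ⟨δ, hδ, fun t h1 h2 => hball ?_⟩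
  simp [Real.ball_eq_Ioo] at *
  constructor <;> linarith

/-- The two origins cannot be separated by open sets. -/
lemma not_separated {U V : Set Branch} (hU : IsOpen U) (hV : IsOpen V)
    (h1 : q (Sum.inl 0) ∈ U) (h2 : q (Sum.inr 0) ∈ V) : (U ∩ V).Nonempty := by
  obtain ⟨δ₁, hδ₁, hU'⟩ := exists_neg_inl hU h1
  obtain ⟨δ₂, hδ₂, hV'⟩ := exists_neg_inr hV h2
  set t := -(min δ₁ δ₂ / 2) with ht
  have hmin : 0 < min δ₁ δ₂ / 2 := by positivity
  have htneg : t < 0 := by rw [ht]; linarith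
  have h1' : -δ₁ < t := by
    have : min δ₁ δ₂ ≤ δ₁ := min_le_left _ _
    rw [ht]; linarith
  have h2' : -δ₂ < t := by
    have : min δ₁ δ₂ ≤ δ₂ := min_le_right _ _
    rw [ht]; linarith
  refine ⟨q (Sum.inl t), hU' t h1' htneg, ?_⟩
  rw [glue htneg]
  exact hV' t h2' htneg

lemma ball_disj {x y : ℝ} (hxy : x ≠ y) :
    Metric.ball x (|x - y|/2) ∩ Metric.ball y (|x - y|/2) = ∅ := by
  apply eq_empty_iff_forall_notMem.2
  rintro z ⟨hz1, hz2⟩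
  rw [Metric.mem_ball, Real.dist_eq] at hz1 hz2
  have h0 : (0:ℝ) < |x - y| := abs_pos.2 (sub_ne_zero.2 hxy)
  have htri : |x - y| ≤ |z - x| + |z - y| := by
    calc |x - y| = |(z - y) - (z - x)| := by ring_nf
      _ ≤ |z - y| + |z - x| := abs_sub _ _
      _ = |z - x| + |z - y| := by ring
  linarith

lemma ball_half_pos {x y : ℝ} (hxy : x ≠ y) : (0:ℝ) < |x - y|/2 :=
  half_pos (abs_pos.2 (sub_ne_zero.2 hxy))

lemma Ul_Ur_disj {s₁ s₂ : Set ℝ} (h : s₁ ∩ s₂ ∩ Iio 0 = ∅) : Ul s₁ ∩ Ur s₂ = ∅ := by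
  apply eq_empty_iff_forall_notMem.2
  rintro p ⟨⟨t, ht, rfl⟩, ⟨t', ht', hq⟩⟩
  obtain ⟨rfl, hneg⟩ := inl_eq_inr.1 hq.symm
  exact eq_empty_iff_forall_notMem.1 h t ⟨⟨ht, ht'⟩, hneg⟩

lemma Ul_Ul_disj {s₁ s₂ : Set ℝ} (h : s₁ ∩ s₂ = ∅) : Ul s₁ ∩ Ul s₂ = ∅ := by
  apply eq_empty_iff_forall_notMem.2
  rintro p ⟨⟨t, ht, rfl⟩, ⟨t', ht', hq⟩⟩
  obtain rfl := inl_eq_inl.1 hq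
  exact eq_empty_iff_forall_notMem.1 h t' ⟨ht, ht'⟩

lemma Ur_Ur_disj {s₁ s₂ : Set ℝ} (h : s₁ ∩ s₂ = ∅) : Ur s₁ ∩ Ur s₂ = ∅ := by
  apply eq_empty_iff_forall_notMem.2
  rintro p ⟨⟨t, ht, rfl⟩, ⟨t', ht', hq⟩⟩
  obtain rfl := inr_eq_inr.1 hq
  exact eq_empty_iff_forall_notMem.1 h t' ⟨ht, ht'⟩

lemma sep_lr (a b : ℝ) (hab : q (Sum.inl a) ≠ q (Sum.inr b)) (h00 : ¬ (a = 0 ∧ b = 0)) :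
    ∃ U V : Set Branch, IsOpen U ∧ IsOpen V ∧
      q (Sum.inl a) ∈ U ∧ q (Sum.inr b) ∈ V ∧ U ∩ V = ∅ := by
  rcases eq_or_ne a b with rfl | hne
  · have ha0 : ¬ a < 0 := fun h => hab (glue h)
    have hapos : 0 < a := by
      rcases lt_trichotomy a 0 with h | rfl | h
      · exact absurd h ha0
      · exact absurd ⟨rfl, rfl⟩ h00
      · exact h
    refine ⟨Ul (Metric.ball a a), Ur (Metric.ball a a),
      isOpen_Ul Metric.isOpen_ball, isOpen_Ur Metric.isOpen_ball,
      ⟨a, Metric.mem_ball_self hapos, rfl⟩, ⟨a, Metric.mem_ball_self hapos, rfl⟩,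
      Ul_Ur_disj ?_⟩
    apply eq_empty_iff_forall_notMem.2
    rintro t ⟨⟨ht, -⟩, hneg⟩
    rw [Metric.mem_ball, Real.dist_eq] at ht
    rw [mem_Iio] at hneg
    have := abs_lt.1 ht
    linarith [this.1]
  · refine ⟨Ul (Metric.ball a (|a-b|/2)), Ur (Metric.ball b (|a-b|/2)),
      isOpen_Ul Metric.isOpen_ball, isOpen_Ur Metric.isOpen_ball,
      ⟨a, Metric.mem_ball_self (ball_half_pos hne), rfl⟩,
      ⟨b, Metric.mem_ball_self (ball_half_pos hne), rfl⟩,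
      Ul_Ur_disj ?_⟩
    rw [ball_disj hne]
    exact empty_inter _

/-- Any two distinct points other than the pair of origins can be separated. -/
lemma separated (a b : ℝ ⊕ ℝ) (hab : q a ≠ q b)
    (h1 : ¬ (q a = q (Sum.inl 0) ∧ q b = q (Sum.inr 0)))
    (h2 : ¬ (q a = q (Sum.inr 0) ∧ q b = q (Sum.inl 0))) :
    ∃ U V : Set Branch, IsOpen U ∧ IsOpen V ∧ q a ∈ U ∧ q b ∈ V ∧ U ∩ V = ∅ := by
  rcases a with a | a <;> rcases b with b | b
  · have hne : a ≠ b := fun h => hab (by rw [h])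
    exact ⟨Ul (Metric.ball a (|a-b|/2)), Ul (Metric.ball b (|a-b|/2)),
      isOpen_Ul Metric.isOpen_ball, isOpen_Ul Metric.isOpen_ball,
      ⟨a, Metric.mem_ball_self (ball_half_pos hne), rfl⟩,
      ⟨b, Metric.mem_ball_self (ball_half_pos hne), rfl⟩,
      Ul_Ul_disj (ball_disj hne)⟩
  · apply sep_lr a b hab
    rintro ⟨rfl, rfl⟩
    exact h1 ⟨rfl, rfl⟩
  · have h00 : ¬ (b = 0 ∧ a = 0) := by rintro ⟨rfl, rfl⟩; exact h2 ⟨rfl, rfl⟩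
    obtain ⟨U, V, hU, hV, hmU, hmV, hd⟩ := sep_lr b a (fun h => hab h.symm) h00
    exact ⟨V, U, hV, hU, hmV, hmU, by rw [inter_comm]; exact hd⟩
  · have hne : a ≠ b := fun h => hab (by rw [h])
    exact ⟨Ur (Metric.ball a (|a-b|/2)), Ur (Metric.ball b (|a-b|/2)),
      isOpen_Ur Metric.isOpen_ball, isOpen_Ur Metric.isOpen_ball,
      ⟨a, Metric.mem_ball_self (ball_half_pos hne), rfl⟩,
      ⟨b, Metric.mem_ball_self (ball_half_pos hne), rfl⟩,
      Ur_Ur_disj (ball_disj hne)⟩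

lemma origins_ne : q (Sum.inl 0) ≠ q (Sum.inr (0:ℝ)) := by
  intro h
  obtain ⟨-, h2⟩ := inl_eq_inr.1 h
  exact lt_irrefl _ h2

/-- A homeomorphism preserves the pair of origins. -/
lemma orig_maps (φ : Branch ≃ₜ Branch) :
    (φ (q (Sum.inl 0)) = q (Sum.inl 0) ∧ φ (q (Sum.inr 0)) = q (Sum.inr 0)) ∨
    (φ (q (Sum.inl 0)) = q (Sum.inr 0) ∧ φ (q (Sum.inr 0)) = q (Sum.inl 0)) := by
  by_contra hcon
  push_neg at hcon
  obtain ⟨a, ha0⟩ := Quot.exists_rep (φ (q (Sum.inl 0)))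
  obtain ⟨b, hb0⟩ := Quot.exists_rep (φ (q (Sum.inr 0)))
  have ha : q a = φ (q (Sum.inl 0)) := ha0
  have hb : q b = φ (q (Sum.inr 0)) := hb0
  have hne : q a ≠ q b := by
    rw [ha, hb]
    intro h
    exact origins_ne (φ.injective h)
  obtain ⟨U, V, hU, hV, hmU, hmV, hd⟩ := separated a b hne
    (by rw [ha, hb]; rintro ⟨x, y⟩; exact hcon.1 x y)
    (by rw [ha, hb]; rintro ⟨x, y⟩; exact hcon.2 x y)
  have hU' : IsOpen (φ ⁻¹' U) := hU.preimage φ.continuous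
  have hV' : IsOpen (φ ⁻¹' V) := hV.preimage φ.continuous
  have hm1 : q (Sum.inl 0) ∈ φ ⁻¹' U := by rw [mem_preimage, ← ha]; exact hmU
  have hm2 : q (Sum.inr 0) ∈ φ ⁻¹' V := by rw [mem_preimage, ← hb]; exact hmV
  obtain ⟨x, hx1, hx2⟩ := not_separated hU' hV' hm1 hm2
  exact eq_empty_iff_forall_notMem.1 hd (φ x) ⟨hx1, hx2⟩

/-- classification of points -/
lemma point_cases (p : Branch) :
    p = q (Sum.inl 0) ∨ p = q (Sum.inr 0) ∨ p ∈ Ul (Iio 0) ∨ p ∈ Ul (Ioi 0) ∨ p ∈ Ur (Ioi 0) := by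
  obtain ⟨a, rfl⟩ := Quot.exists_rep p
  rcases a with t | t
  · rcases lt_trichotomy t 0 with h | rfl | h
    · exact Or.inr (Or.inr (Or.inl ⟨t, h, rfl⟩))
    · exact Or.inl rfl
    · exact Or.inr (Or.inr (Or.inr (Or.inl ⟨t, h, rfl⟩)))
  · rcases lt_trichotomy t 0 with h | rfl | h
    · exact Or.inr (Or.inr (Or.inl ⟨t, h, (glue h)⟩))
    · exact Or.inr (Or.inl rfl)
    · exact Or.inr (Or.inr (Or.inr (Or.inr ⟨t, h, rfl⟩)))

lemma o1_mem_closure_G : q (Sum.inl 0) ∈ closure (Ul (Iio 0)) := by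
  rw [mem_closure_iff]
  intro U hU hm
  obtain ⟨δ, hδ, h⟩ := exists_neg_inl hU hm
  have ht : -(δ/2) < 0 := by linarith
  exact ⟨q (Sum.inl (-(δ/2))), h _ (by linarith) ht, ⟨-(δ/2), ht, rfl⟩⟩

lemma o2_mem_closure_G : q (Sum.inr 0) ∈ closure (Ul (Iio 0)) := by
  rw [mem_closure_iff]
  intro U hU hm
  obtain ⟨δ, hδ, h⟩ := exists_neg_inr hU hm
  have ht : -(δ/2) < 0 := by linarith
  exact ⟨q (Sum.inr (-(δ/2))), h _ (by linarith) ht, ⟨-(δ/2), ht, glue ht⟩⟩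

lemma o2_not_closure_R1 : q (Sum.inr 0) ∉ closure (Ul (Ioi 0)) := by
  intro h
  obtain ⟨p, hp1, hp2⟩ := mem_closure_iff.1 h (Ur (Iio 1)) (isOpen_Ur isOpen_Iio)
    ⟨0, by norm_num, rfl⟩
  obtain ⟨t, ht, rfl⟩ := hp1
  obtain ⟨s, hs, hq⟩ := hp2
  obtain ⟨rfl, hneg⟩ := inl_eq_inr.1 hq
  rw [mem_Ioi] at hs
  exact absurd hneg (not_lt.2 hs.le)

lemma o1_not_closure_R2 : q (Sum.inl 0) ∉ closure (Ur (Ioi 0)) := by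
  intro h
  obtain ⟨p, hp1, hp2⟩ := mem_closure_iff.1 h (Ul (Iio 1)) (isOpen_Ul isOpen_Iio)
    ⟨0, by norm_num, rfl⟩
  obtain ⟨t, ht, rfl⟩ := hp1
  obtain ⟨s, hs, hq⟩ := hp2
  obtain ⟨rfl, hneg⟩ := inl_eq_inr.1 hq.symm
  rw [mem_Ioi] at hs
  exact absurd hneg (not_lt.2 hs.le)

/-- A homeomorphism preserving the origins maps the glued part into itself. -/
lemma glue_maps (φ : Branch ≃ₜ Branch)
    (horig : (φ (q (Sum.inl 0)) = q (Sum.inl 0) ∧ φ (q (Sum.inr 0)) = q (Sum.inr 0)) ∨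
      (φ (q (Sum.inl 0)) = q (Sum.inr 0) ∧ φ (q (Sum.inr 0)) = q (Sum.inl 0))) :
    ∀ t : ℝ, t < 0 → ∃ s, s < 0 ∧ φ (q (Sum.inl t)) = q (Sum.inl s) := by
  set S := φ '' Ul (Iio 0) with hS
  have hSim : S = (fun t : ℝ => φ (q (Sum.inl t))) '' (Iio 0) := by
    rw [hS, Ul, Set.image_image]
  have hconn : IsPreconnected S := by
    rw [hSim]
    exact isPreconnected_Iio.image _ ((φ.continuous.comp continuous_ql).continuousOn)
  have hnotorig : ∀ p ∈ S, p ≠ q (Sum.inl 0) ∧ p ≠ q (Sum.inr 0) := by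
    rintro p ⟨x, ⟨t, ht, rfl⟩, rfl⟩
    have ht' : t < 0 := ht
    constructor <;> intro h
    · have hthis : q (Sum.inl t) = φ.symm (q (Sum.inl 0)) := by
        rw [← h]; exact (φ.symm_apply_apply _).symm
      rcases horig with ⟨h1, -⟩ | ⟨-, h2⟩
      · have h1' : φ.symm (q (Sum.inl 0)) = q (Sum.inl 0) := φ.symm_apply_eq.2 h1.symm
        rw [h1'] at hthis
        exact absurd (inl_eq_inl.1 hthis) (ne_of_lt ht')
      · have h2' : φ.symm (q (Sum.inl 0)) = q (Sum.inr 0) := φ.symm_apply_eq.2 h2.symm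
        rw [h2'] at hthis
        obtain ⟨rfl, -⟩ := inl_eq_inr.1 hthis
        exact lt_irrefl _ ht'
    · have hthis : q (Sum.inl t) = φ.symm (q (Sum.inr 0)) := by
        rw [← h]; exact (φ.symm_apply_apply _).symm
      rcases horig with ⟨-, h2⟩ | ⟨h1, -⟩
      · have h2' : φ.symm (q (Sum.inr 0)) = q (Sum.inr 0) := φ.symm_apply_eq.2 h2.symm
        rw [h2'] at hthis
        obtain ⟨rfl, -⟩ := inl_eq_inr.1 hthis
        exact lt_irrefl _ ht'
      · have h1' : φ.symm (q (Sum.inr 0)) = q (Sum.inl 0) := φ.symm_apply_eq.2 h1.symm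
        rw [h1'] at hthis
        exact absurd (inl_eq_inl.1 hthis) (ne_of_lt ht')
  have hsub : S ⊆ Ul (Iio 0) ∪ (Ul (Ioi 0) ∪ Ur (Ioi 0)) := by
    intro p hp
    rcases point_cases p with h | h | h | h | h
    · exact absurd h (hnotorig p hp).1
    · exact absurd h (hnotorig p hp).2
    · exact Or.inl h
    · exact Or.inr (Or.inl h)
    · exact Or.inr (Or.inr h)
  -- closure membership of the two origins
  have hocl : q (Sum.inl 0) ∈ closure S ∧ q (Sum.inr 0) ∈ closure S := by
    have himg : φ '' closure (Ul (Iio 0)) ⊆ closure S :=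
      hS ▸ image_closure_subset_closure_image φ.continuous
    have h1 : φ (q (Sum.inl 0)) ∈ closure S := himg ⟨_, o1_mem_closure_G, rfl⟩
    have h2 : φ (q (Sum.inr 0)) ∈ closure S := himg ⟨_, o2_mem_closure_G, rfl⟩
    rcases horig with ⟨e1, e2⟩ | ⟨e1, e2⟩
    · exact ⟨e1 ▸ h1, e2 ▸ h2⟩
    · exact ⟨e2 ▸ h2, e1 ▸ h1⟩
  have e1 : Iio (0:ℝ) ∩ Ioi 0 = ∅ := by
    ext x; simp only [mem_inter_iff, mem_Iio, mem_Ioi, mem_empty_iff_false, iff_false, not_and]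
    intro h1 h2; linarith
  have e2 : Ioi (0:ℝ) ∩ Ioi 0 ∩ Iio 0 = ∅ := by
    ext x
    simp only [mem_inter_iff, mem_Iio, mem_Ioi, mem_empty_iff_false, iff_false, not_and]
    rintro ⟨h1, -⟩ h2; linarith
  have e3 : Iio (0:ℝ) ∩ Ioi 0 ∩ Iio 0 = ∅ := by
    ext x
    simp only [mem_inter_iff, mem_Iio, mem_Ioi, mem_empty_iff_false, iff_false, not_and]
    rintro ⟨h1, h2⟩; linarith
  have hfinal : S ⊆ Ul (Iio 0) := by
    by_cases hG : (S ∩ Ul (Iio 0)).Nonempty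
    · refine hconn.subset_left_of_subset_union (isOpen_Ul isOpen_Iio)
        ((isOpen_Ul isOpen_Ioi).union (isOpen_Ur isOpen_Ioi)) ?_ hsub hG
      rw [disjoint_union_right]
      constructor
      · exact disjoint_iff_inter_eq_empty.2 (Ul_Ul_disj e1)
      · exact disjoint_iff_inter_eq_empty.2 (Ul_Ur_disj e3)
    · exfalso
      have hsub2 : S ⊆ Ul (Ioi 0) ∪ Ur (Ioi 0) := by
        intro p hp
        rcases hsub hp with h | h
        · exact absurd ⟨p, hp, h⟩ hG
        · exact h
      by_cases hR1 : (S ∩ Ul (Ioi 0)).Nonempty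
      · have : S ⊆ Ul (Ioi 0) := by
          refine hconn.subset_left_of_subset_union (isOpen_Ul isOpen_Ioi)
            (isOpen_Ur isOpen_Ioi) ?_ hsub2 hR1
          exact disjoint_iff_inter_eq_empty.2 (Ul_Ur_disj e2)
        exact o2_not_closure_R1 (closure_mono this hocl.2)
      · have : S ⊆ Ur (Ioi 0) := by
          intro p hp
          rcases hsub2 hp with h | h
          · exact absurd ⟨p, hp, h⟩ hR1
          · exact h
        exact o1_not_closure_R2 (closure_mono this hocl.1)
  intro t ht
  obtain ⟨s, hs, hq⟩ := hfinal ⟨q (Sum.inl t), ⟨t, ht, rfl⟩, rfl⟩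
  exact ⟨s, hs, hq.symm⟩

lemma chartB_false_zero : chartB false 0 = q (Sum.inr 0) := by
  show q (Sum.inr (0^3)) = q (Sum.inr 0)
  norm_num

/-- The analytic heart: derives a contradiction from smooth transition data. -/
lemma analytic_core (φ : Branch ≃ₜ Branch) (i₁ i₂ : Bool)
    (hBf : ∀ t : ℝ, t < 0 → ∃ s, s < 0 ∧ φ (q (Sum.inl t)) = q (Sum.inl s))
    (hB' : ∀ t : ℝ, t < 0 → ∃ s, s < 0 ∧ φ.symm (q (Sum.inl t)) = q (Sum.inl s))
    (h0 : φ (chartA i₁ 0) = chartB false 0)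
    (h0' : φ.symm (chartB true 0) = chartA i₂ 0)
    (hgc : ContDiffOn ℝ (⊤ : ℕ∞) (fun t => Function.invFun (chartB false) (φ (chartA i₁ t)))
      {t : ℝ | φ (chartA i₁ t) ∈ Set.range (chartB false)})
    (hψc : ContDiffOn ℝ (⊤ : ℕ∞) (fun u => Function.invFun (chartA i₁) (φ.symm (chartB false u)))
      {u : ℝ | φ.symm (chartB false u) ∈ Set.range (chartA i₁)})
    (hΨc : ContDiffOn ℝ (⊤ : ℕ∞) (fun u => Function.invFun (chartA i₂) (φ.symm (chartB true u)))
      {u : ℝ | φ.symm (chartB true u) ∈ Set.range (chartA i₂)}) : False := by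
  set g : ℝ → ℝ := fun t => Function.invFun (chartB false) (φ (chartA i₁ t)) with hgdef
  set ψ : ℝ → ℝ := fun u => Function.invFun (chartA i₁) (φ.symm (chartB false u)) with hψdef
  set Ψ : ℝ → ℝ := fun u => Function.invFun (chartA i₂) (φ.symm (chartB true u)) with hΨdef
  have cube_neg : ∀ u : ℝ, u < 0 → u^3 < 0 := fun u hu => Odd.pow_neg (by decide) hu
  have chartBf : ∀ u : ℝ, chartB false u = q (Sum.inr (u^3)) := fun u => rfl
  have chartBt : ∀ u : ℝ, chartB true u = q (Sum.inl u) := fun u => rfl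
  -- the basic structure of ψ on negative reals
  have F1 : ∀ u : ℝ, u < 0 → φ.symm (chartB false u) = chartA i₁ (ψ u) ∧ ψ u < 0 := by
    intro u hu
    have hc : u^3 < 0 := cube_neg u hu
    have hpt : chartB false u = q (Sum.inl (u^3)) := by
      rw [chartBf, glue hc]
    obtain ⟨s, hs, heq⟩ := hB' (u^3) hc
    have hval : φ.symm (chartB false u) = chartA i₁ s := by
      rw [hpt, heq, chartA_glued hs]
    have hψu : ψ u = s := by rw [hψdef]; simp only; rw [hval, invFun_chartA]
    rw [hψu]
    exact ⟨hval, hs⟩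
  -- ψ at zero
  have hsymm0 : φ.symm (chartB false 0) = chartA i₁ 0 := by
    rw [← h0, φ.symm_apply_apply]
  have hψ0 : ψ 0 = 0 := by rw [hψdef]; simp only; rw [hsymm0, invFun_chartA]
  -- Ψ on negative reals agrees with ψ ∘ cube root
  have FΨ : ∀ v : ℝ, v < 0 → Ψ (v^3) = ψ v := by
    intro v hv
    have hc : v^3 < 0 := cube_neg v hv
    obtain ⟨s, hs, heq⟩ := hB' (v^3) hc
    have h1 : Ψ (v^3) = s := by
      rw [hΨdef]; simp only
      rw [chartBt, heq, ← chartA_glued (i := i₂) hs, invFun_chartA]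
    have h2 : ψ v = s := by
      rw [hψdef]; simp only
      rw [chartBf, ← glue hc, heq, ← chartA_glued (i := i₁) hs, invFun_chartA]
    rw [h1, h2]
  have hΨ0 : Ψ 0 = 0 := by
    rw [hΨdef]; simp only
    rw [h0', invFun_chartA]
  -- g on the relevant set
  have Fg : ∀ t : ℝ, t ≤ 0 → g (ψ t) = t := by
    intro t ht
    rcases lt_or_eq_of_le ht with ht' | rfl
    · obtain ⟨hval, -⟩ := F1 t ht'
      rw [hgdef]; simp only
      rw [← hval, φ.apply_symm_apply, invFun_chartB]
    · rw [hψ0, hgdef]; simp only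
      rw [h0, invFun_chartB]
  -- domains contain Iic 0
  have Dg : Iic (0:ℝ) ⊆ {t : ℝ | φ (chartA i₁ t) ∈ Set.range (chartB false)} := by
    intro t ht
    rcases lt_or_eq_of_le (mem_Iic.1 ht) with ht' | rfl
    · obtain ⟨s, hs, heq⟩ := hBf t ht'
      obtain ⟨v, hv⟩ := cube_surj s
      rw [mem_setOf_eq, chartA_glued ht', heq, glue hs]
      exact ⟨v, by rw [chartBf, hv]⟩
    · rw [mem_setOf_eq, h0]
      exact mem_range_self 0
  have Dψ : Iic (0:ℝ) ⊆ {u : ℝ | φ.symm (chartB false u) ∈ Set.range (chartA i₁)} := by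
    intro u hu
    rcases lt_or_eq_of_le (mem_Iic.1 hu) with hu' | rfl
    · rw [mem_setOf_eq, (F1 u hu').1]; exact mem_range_self _
    · rw [mem_setOf_eq, hsymm0]; exact mem_range_self 0
  have DΨ : Iic (0:ℝ) ⊆ {u : ℝ | φ.symm (chartB true u) ∈ Set.range (chartA i₂)} := by
    intro u hu
    rcases lt_or_eq_of_le (mem_Iic.1 hu) with hu' | rfl
    · obtain ⟨s, hs, heq⟩ := hB' u hu'
      rw [mem_setOf_eq, chartBt, heq, ← chartA_glued (i := i₂) hs]
      exact mem_range_self _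
    · rw [mem_setOf_eq, h0']; exact mem_range_self 0
  have hmem0 : (0:ℝ) ∈ Iic (0:ℝ) := mem_Iic.2 le_rfl
  have huniq : UniqueDiffWithinAt ℝ (Iic (0:ℝ)) 0 := uniqueDiffOn_Iic 0 0 hmem0
  -- derivatives within Iic 0 at 0
  have hψd : DifferentiableWithinAt ℝ ψ (Iic 0) 0 :=
    ((hψc.mono Dψ).differentiableOn (by simp)) 0 hmem0
  have hgd : DifferentiableWithinAt ℝ g (Iic 0) 0 :=
    ((hgc.mono Dg).differentiableOn (by simp)) 0 hmem0
  have hΨd : DifferentiableWithinAt ℝ Ψ (Iic 0) 0 :=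
    ((hΨc.mono DΨ).differentiableOn (by simp)) 0 hmem0
  set c := derivWithin ψ (Iic 0) 0 with hcdef
  set d := derivWithin g (Iic 0) 0 with hddef
  set e := derivWithin Ψ (Iic 0) 0 with hedef
  have hψ' : HasDerivWithinAt ψ c (Iic 0) 0 := hψd.hasDerivWithinAt
  have hg' : HasDerivWithinAt g d (Iic 0) 0 := hgd.hasDerivWithinAt
  have hΨ' : HasDerivWithinAt Ψ e (Iic 0) 0 := hΨd.hasDerivWithinAt
  -- chain rule: derivative of g ∘ ψ = d * c, but g ∘ ψ = id on Iic 0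
  have hmaps : MapsTo ψ (Iic 0) (Iic 0) := by
    intro u hu
    rcases lt_or_eq_of_le (mem_Iic.1 hu) with hu' | rfl
    · exact mem_Iic.2 (le_of_lt (F1 u hu').2)
    · rw [hψ0]; exact hmem0
  have hg'' : HasDerivWithinAt g d (Iic 0) (ψ 0) := by rw [hψ0]; exact hg'
  have hcomp : HasDerivWithinAt (g ∘ ψ) (d * c) (Iic 0) 0 := hg''.comp 0 hψ' hmaps
  have hid : HasDerivWithinAt (fun u : ℝ => u) (d * c) (Iic 0) 0 := by
    refine hcomp.congr (fun u hu => ?_) ?_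
    · exact (Fg u (mem_Iic.1 hu)).symm
    · exact (Fg 0 le_rfl).symm
  have hdc : d * c = 1 := by
    have h1 := hid.derivWithin huniq
    have h2 := (hasDerivWithinAt_id (0:ℝ) (Iic 0)).derivWithin huniq
    rw [← h1, ← h2]
    rfl
  have hc0 : c ≠ 0 := by
    intro h
    rw [h, mul_zero] at hdc
    exact zero_ne_one hdc
  -- slope limits
  have hId : Iic (0:ℝ) \ {0} = Iio 0 := Iic_diff_right
  have hsψ : Tendsto (slope ψ 0) (𝓝[<] (0:ℝ)) (𝓝 c) := by
    have := hasDerivWithinAt_iff_tendsto_slope.1 hψ'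
    rwa [hId] at this
  have hsΨ : Tendsto (slope Ψ 0) (𝓝[<] (0:ℝ)) (𝓝 e) := by
    have := hasDerivWithinAt_iff_tendsto_slope.1 hΨ'
    rwa [hId] at this
  have hslopeψ : ∀ v : ℝ, v ≠ 0 → slope ψ 0 v = ψ v / v := by
    intro v hv
    rw [slope_def_field, hψ0, sub_zero, sub_zero]
  -- cube map tends to 𝓝[<] 0
  have hcube : Tendsto (fun v : ℝ => v^3) (𝓝[<] (0:ℝ)) (𝓝[<] (0:ℝ)) := by
    rw [tendsto_nhdsWithin_iff]
    constructor
    · have h1 : Tendsto (fun v : ℝ => v^3) (𝓝 0) (𝓝 0) := by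
        have := (continuous_pow 3 (M := ℝ)).tendsto 0
        simpa using this
      exact h1.mono_left nhdsWithin_le_nhds
    · exact eventually_mem_nhdsWithin.mono fun v hv => cube_neg v hv
  have hA : Tendsto (fun v : ℝ => ψ v / v^3) (𝓝[<] (0:ℝ)) (𝓝 e) := by
    have h1 : Tendsto (fun v : ℝ => slope Ψ 0 (v^3)) (𝓝[<] (0:ℝ)) (𝓝 e) := hsΨ.comp hcube
    refine h1.congr' ?_
    filter_upwards [eventually_mem_nhdsWithin] with v hv
    have hvneg : v < 0 := hv
    rw [slope_def_field, hΨ0, sub_zero, sub_zero, FΨ v hvneg]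
  have hBt : Tendsto (fun v : ℝ => ψ v / v) (𝓝[<] (0:ℝ)) (𝓝 c) := by
    refine hsψ.congr' ?_
    filter_upwards [eventually_mem_nhdsWithin] with v hv
    exact hslopeψ v (ne_of_lt hv)
  -- |ψ v / v| * (v^2)⁻¹ tends to atTop
  have habs : Tendsto (fun v : ℝ => |ψ v / v|) (𝓝[<] (0:ℝ)) (𝓝 |c|) := hBt.abs
  have hsq : Tendsto (fun v : ℝ => v^2) (𝓝[<] (0:ℝ)) (𝓝[>] (0:ℝ)) := by
    rw [tendsto_nhdsWithin_iff]
    constructor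
    · have h1 : Tendsto (fun v : ℝ => v^2) (𝓝 0) (𝓝 0) := by
        have := (continuous_pow 2 (M := ℝ)).tendsto 0
        simpa using this
      exact h1.mono_left nhdsWithin_le_nhds
    · exact eventually_mem_nhdsWithin.mono fun v hv => mem_Ioi.2 (pow_two_pos_of_ne_zero (ne_of_lt (mem_Iio.1 hv)))
  have hinv : Tendsto (fun v : ℝ => (v^2)⁻¹) (𝓝[<] (0:ℝ)) atTop :=
    tendsto_inv_nhdsGT_zero.comp hsq
  have hprod : Tendsto (fun v : ℝ => |ψ v / v| * (v^2)⁻¹) (𝓝[<] (0:ℝ)) atTop :=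
    Filter.Tendsto.pos_mul_atTop (abs_pos.2 hc0) habs hinv
  have hprod' : Tendsto (fun v : ℝ => |ψ v / v^3|) (𝓝[<] (0:ℝ)) atTop := by
    refine hprod.congr' ?_
    filter_upwards [eventually_mem_nhdsWithin] with v hv
    have hvne : v ≠ 0 := ne_of_lt hv
    have hveq : ψ v / v^3 = (ψ v / v) * (v^2)⁻¹ := by
      rw [show v^3 = v * v^2 by ring, div_mul_eq_div_div, div_eq_mul_inv]
    rw [hveq, abs_mul, abs_of_nonneg (inv_nonneg.2 (sq_nonneg v))]
  exact not_tendsto_atTop_of_tendsto_nhds hA.abs hprod'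

end
end BranchAux

open BranchAux

/-- The two differentiable structures on the simple branching are not diffeomorphic:
no homeomorphism of the branching reads as a `C^∞` map with `C^∞` inverse in the
respective charts. -/
theorem branch_structures_not_diffeomorphic :
    ¬ ∃ φ : Branch ≃ₜ Branch,
      (∀ i j : Bool,
        ContDiffOn ℝ (⊤ : ℕ∞) (fun t => Function.invFun (chartB j) (φ (chartA i t)))
          {t : ℝ | φ (chartA i t) ∈ Set.range (chartB j)}) ∧
      (∀ i j : Bool,
        ContDiffOn ℝ (⊤ : ℕ∞) (fun t => Function.invFun (chartA i) (φ.symm (chartB j t)))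
          {t : ℝ | φ.symm (chartB j t) ∈ Set.range (chartA i)}) := by
  rintro ⟨φ, h1, h2⟩
  have horig := orig_maps φ
  have hBf := glue_maps φ horig
  have horig' : (φ.symm (q (Sum.inl 0)) = q (Sum.inl 0) ∧
        φ.symm (q (Sum.inr 0)) = q (Sum.inr 0)) ∨
      (φ.symm (q (Sum.inl 0)) = q (Sum.inr 0) ∧ φ.symm (q (Sum.inr 0)) = q (Sum.inl 0)) := by
    rcases horig with ⟨e1, e2⟩ | ⟨e1, e2⟩
    · exact Or.inl ⟨φ.symm_apply_eq.2 e1.symm, φ.symm_apply_eq.2 e2.symm⟩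
    · exact Or.inr ⟨φ.symm_apply_eq.2 e2.symm, φ.symm_apply_eq.2 e1.symm⟩
  have hB' := glue_maps φ.symm horig'
  rcases horig with ⟨e1, e2⟩ | ⟨e1, e2⟩
  · refine analytic_core φ false true hBf hB' ?_ ?_ (h1 false false) (h2 false false)
      (h2 true true)
    · show φ (q (Sum.inr 0)) = chartB false 0
      rw [chartB_false_zero]
      exact e2
    · show φ.symm (q (Sum.inl 0)) = q (Sum.inl 0)
      exact φ.symm_apply_eq.2 e1.symm
  · refine analytic_core φ true false hBf hB' ?_ ?_ (h1 true false) (h2 true false)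
      (h2 false true)
    · show φ (q (Sum.inl 0)) = chartB false 0
      rw [chartB_false_zero]
      exact e1
    · show φ.symm (q (Sum.inl 0)) = q (Sum.inr 0)
      exact φ.symm_apply_eq.2 e2.symm
end

section
/- Let f be a C^r function (1 ≤ r ≤ ∞) defined on an open set I' ⊆ ℝ whose derivative is nonzero at every point of a closed bounded interval I ⊂ I'. Then the restriction of f to I extends to a C^r function on all of ℝ whose derivative is nonzero everywhere. -/
/-!
By the intermediate value theorem `f'` has constant sign on `[a, b]`, so it takes values in an
open half-line `S`. A smooth cutoff equal to `1` on `[a, b]` and supported where `f' ∈ S` blends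
`f'` with a constant of `S` into a `C^(r-1)` function `φ : ℝ → S`. Then
`g x = f a + ∫ t in a..x, φ t` is `C^r` with derivative `φ`, nowhere zero, and agrees with `f` on
`[a, b]` since both have derivative `f'` there and coincide at `a`.
-/

open Set
open scoped ContDiff Manifold

section
variable {𝕜 E F : Type*} [NontriviallyNormedField 𝕜] [NormedAddCommGroup E] [NormedSpace 𝕜 E]
  [NormedAddCommGroup F] [NormedSpace 𝕜 F]

theorem ContDiffOn.contDiff_smul_of_tsupport_subset {n : WithTop ℕ∞} {χ : E → 𝕜} {h : E → F}
    {U : Set E} (hh : ContDiffOn 𝕜 n h U) (hU : IsOpen U) (hχ : ContDiff 𝕜 n χ)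
    (hχU : tsupport χ ⊆ U) : ContDiff 𝕜 n fun x => χ x • h x := by
  refine contDiff_iff_contDiffAt.2 fun x => ?_
  by_cases hx : x ∈ tsupport χ
  · exact hχ.contDiffAt.smul (hh.contDiffAt (hU.mem_nhds (hχU hx)))
  · refine (contDiffAt_const (c := (0 : F))).congr_of_eventuallyEq ?_
    filter_upwards [notMem_tsupport_iff_eventuallyEq.1 hx] with y hy
    simp [hy]

end

theorem exists_contDiff_eqOn_one_tsupport_subset {E : Type*} [NormedAddCommGroup E]
    [NormedSpace ℝ E] [FiniteDimensional ℝ E] {K U : Set E} (hK : IsClosed K) (hU : IsOpen U)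
    (hKU : K ⊆ U) :
    ∃ χ : E → ℝ, ContDiff ℝ ∞ χ ∧ EqOn χ 1 K ∧ tsupport χ ⊆ U ∧ ∀ x, χ x ∈ Icc 0 1 := by
  obtain ⟨V, hV, hKV, hVU⟩ := normal_exists_closure_subset hK hU hKU
  obtain ⟨χ, hχV, hχK, hχ01⟩ := exists_contMDiffMap_zero_one_of_isClosed 𝓘(ℝ, E) (n := (⊤ : ℕ∞))
    hV.isClosed_compl hK (disjoint_compl_left_iff_subset.2 hKV)
  refine ⟨χ, contMDiff_iff_contDiff.1 χ.contMDiff, hχK, ?_, hχ01⟩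
  refine (closure_mono fun x hx => ?_).trans hVU
  by_contra hxV
  exact hx (hχV hxV)

theorem ContDiffOn.exists_contDiff_eqOn_mapsTo_convex {E F : Type*} [NormedAddCommGroup E]
    [NormedSpace ℝ E] [FiniteDimensional ℝ E] [NormedAddCommGroup F] [NormedSpace ℝ F]
    {n : ℕ∞} {h : E → F} {U K : Set E} {S : Set F} (hh : ContDiffOn ℝ n h U) (hU : IsOpen U)
    (hK : IsClosed K) (hKU : K ⊆ U) (hS : Convex ℝ S) (hhS : MapsTo h U S) {c : F}
    (hc : c ∈ S) : ∃ φ : E → F, ContDiff ℝ n φ ∧ EqOn h φ K ∧ ∀ x, φ x ∈ S := by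
  obtain ⟨χ, hχ, hχK, hχU, hχ01⟩ := exists_contDiff_eqOn_one_tsupport_subset hK hU hKU
  have hχn : ContDiff ℝ n χ := hχ.of_le (mod_cast le_top)
  refine ⟨fun x => χ x • h x + (1 - χ x) • c,
    (hh.contDiff_smul_of_tsupport_subset hU hχn hχU).add
      ((contDiff_const.sub hχn).smul contDiff_const),
    fun x hx => by simp [hχK hx], fun x => ?_⟩
  by_cases hx : x ∈ U
  · exact hS (hhS hx) hc (hχ01 x).1 (sub_nonneg.2 (hχ01 x).2) (add_sub_cancel _ _)
  · simpa [image_eq_zero_of_notMem_tsupport (mt (@hχU x) hx)] using hc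

theorem ContDiff.contDiff_primitive {E : Type*} [NormedAddCommGroup E] [NormedSpace ℝ E]
    [CompleteSpace E] {n : ℕ∞} {φ : ℝ → E} (hφ : ContDiff ℝ n φ) (a : ℝ) :
    ContDiff ℝ (n + 1) fun x => ∫ t in a..x, φ t := by
  have hderiv : deriv (fun x => ∫ t in a..x, φ t) = φ :=
    funext (Continuous.deriv_integral φ hφ.continuous a)
  refine contDiff_succ_iff_deriv.2 ⟨fun x => ?_, by simp, by rwa [hderiv]⟩
  exact (hφ.continuous.integral_hasStrictDerivAt a x).hasDerivAt.differentiableAt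

theorem IsPreconnected.forall_pos_or_forall_neg {X : Type*} [TopologicalSpace X] {s : Set X}
    (hs : IsPreconnected s) {h : X → ℝ} (hh : ContinuousOn h s) (hne : ∀ x ∈ s, h x ≠ 0) :
    (∀ x ∈ s, 0 < h x) ∨ (∀ x ∈ s, h x < 0) := by
  by_contra! ⟨⟨x, hx, hhx⟩, ⟨y, hy, hhy⟩⟩
  obtain ⟨z, hz, hz0⟩ := hs.intermediate_value hx hy hh ⟨hhx, hhy⟩
  exact hne z hz hz0

theorem ContDiffOn.exists_contDiff_eqOn_Icc_deriv_mem {r : ℕ∞} (hr : 1 ≤ r) {I' : Set ℝ}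
    (hI' : IsOpen I') {f : ℝ → ℝ} (hf : ContDiffOn ℝ r f I') {a b : ℝ} (hIc : Icc a b ⊆ I')
    {S : Set ℝ} (hS : IsOpen S) (hSc : Convex ℝ S) (hSne : S.Nonempty)
    (hderiv : ∀ t ∈ Icc a b, deriv f t ∈ S) :
    ∃ g : ℝ → ℝ, ContDiff ℝ r g ∧ EqOn f g (Icc a b) ∧ ∀ t, deriv g t ∈ S := by
  have hr' : ((r - 1 : ℕ∞) : WithTop ℕ∞) + 1 = r := by norm_cast; exact tsub_add_cancel_of_le hr
  have hf' : ContDiffOn ℝ (r - 1 : ℕ∞) (deriv f) I' := hf.deriv_of_isOpen hI' hr'.le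
  have hU : IsOpen (I' ∩ deriv f ⁻¹' S) := hf'.continuousOn.isOpen_inter_preimage hI' hS
  obtain ⟨φ, hφ, hφf, hφS⟩ := (hf'.mono inter_subset_left).exists_contDiff_eqOn_mapsTo_convex hU
    isClosed_Icc (fun t ht => ⟨hIc ht, hderiv t ht⟩) hSc (fun _ ht => ht.2) hSne.some_mem
  set g : ℝ → ℝ := fun x => f a + ∫ t in a..x, φ t
  have hg : ∀ x, HasDerivAt g (φ x) x := fun x =>
    ((hφ.continuous.integral_hasStrictDerivAt a x).hasDerivAt).const_add (f a)
  refine ⟨g, hr' ▸ contDiff_const.add (hφ.contDiff_primitive a), fun x hx => ?_,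
    fun t => (hg t).deriv ▸ hφS t⟩
  have hfd : DifferentiableOn ℝ f I' := hf.differentiableOn (mod_cast (one_pos.trans_le hr).ne')
  refine eq_of_has_deriv_right_eq (f' := deriv f) (fun y hy => ?_) (fun y hy => ?_)
    (hfd.continuousOn.mono hIc) (fun y _ => (hg y).continuousAt.continuousWithinAt) (by simp [g])
    x hx
  · have hy' : y ∈ I' := hIc (Ico_subset_Icc_self hy)
    exact (hfd.differentiableAt (hI'.mem_nhds hy')).hasDerivAt.hasDerivWithinAt
  · exact hφf (Ico_subset_Icc_self hy) ▸ (hg y).hasDerivWithinAt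

theorem extend_nonvanishing_deriv_general {r : ℕ∞} (hr : 1 ≤ r)
    (I' : Set ℝ) (hI' : IsOpen I') (f : ℝ → ℝ) (hf : ContDiffOn ℝ r f I')
    (a b : ℝ) (hIc : Set.Icc a b ⊆ I')
    (hderiv : ∀ t ∈ Set.Icc a b, deriv f t ≠ 0) :
    ∃ g : ℝ → ℝ, ContDiff ℝ r g ∧ Set.EqOn f g (Set.Icc a b) ∧
      ∀ t : ℝ, deriv g t ≠ 0 := by
  have hcont : ContinuousOn (deriv f) (Icc a b) :=
    (hf.continuousOn_deriv_of_isOpen hI' (mod_cast hr)).mono hIc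
  rcases isPreconnected_Icc.forall_pos_or_forall_neg hcont hderiv with hpos | hneg
  · obtain ⟨g, hg, hfg, hg'⟩ := hf.exists_contDiff_eqOn_Icc_deriv_mem hr hI' hIc isOpen_Ioi
      (convex_Ioi 0) nonempty_Ioi hpos
    exact ⟨g, hg, hfg, fun t => (hg' t).ne'⟩
  · obtain ⟨g, hg, hfg, hg'⟩ := hf.exists_contDiff_eqOn_Icc_deriv_mem hr hI' hIc isOpen_Iio
      (convex_Iio 0) nonempty_Iio hneg
    exact ⟨g, hg, hfg, fun t => (hg' t).ne⟩

/-- A `C^r` function (`1 ≤ r`) defined on an open set `I'` whose derivative is nonzero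
at every point of a compact interval `[a,b] ⊆ I'` extends from `[a,b]` to a `C^r`
function on all of `ℝ` with everywhere nonzero derivative. -/
theorem extend_nonvanishing_deriv {r : ℕ∞} (hr : 1 ≤ r)
    (I' : Set ℝ) (hI' : IsOpen I') (f : ℝ → ℝ) (hf : ContDiffOn ℝ r f I')
    (a b : ℝ) (hab : a ≤ b) (hIc : Set.Icc a b ⊆ I')
    (hderiv : ∀ t ∈ Set.Icc a b, deriv f t ≠ 0) :
    ∃ g : ℝ → ℝ, ContDiff ℝ r g ∧ Set.EqOn f g (Set.Icc a b) ∧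
      ∀ t : ℝ, deriv g t ≠ 0 :=
  extend_nonvanishing_deriv_general hr I' hI' f hf a b hIc hderiv
end

section
/- Every C^r differentiable structure (1 ≤ r ≤ ∞) on the topological space ℝ is C^r-diffeomorphic to the standard one; equivalently, if R' denotes ℝ with any C^r atlas compatible with its topology, there is a C^r isomorphism (bijective C^r map with C^r inverse) from R' to ℝ with its usual smooth structure. -/
/-- A `C^r` atlas on a 1-dimensional manifold `V` (Hausdorffness not assumed):
charts are open embeddings `ℝ → V` covering `V`, with `C^r` transition maps. -/
structure OneManifoldCr (r : ℕ∞) (V : Type*) [TopologicalSpace V] where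
  ι : Type
  chart : ι → ℝ → V
  openEmb : ∀ i, Topology.IsOpenEmbedding (chart i)
  cover : ∀ x : V, ∃ i t, chart i t = x
  compat : ∀ i j, ContDiffOn ℝ r (fun t => Function.invFun (chart j) (chart i t))
    {t : ℝ | chart i t ∈ Set.range (chart j)}

variable {r : ℕ∞} {V : Type*} [TopologicalSpace V]

/-- `f : V → ℝ` is `C^r` for the atlas `A` if its read in every chart is `C^r`. -/
def OneManifoldCr.IsCrMap (A : OneManifoldCr r V) (f : V → ℝ) : Prop :=
  ∀ i, ContDiff ℝ r (f ∘ A.chart i)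

/-- `f` is `C^r` on an open set `U ⊆ V` if its reads in charts are `C^r` on the
preimages of `U`. -/
def OneManifoldCr.IsCrOn (A : OneManifoldCr r V) (f : V → ℝ) (U : Set V) : Prop :=
  ∀ i, ContDiffOn ℝ r (f ∘ A.chart i) (A.chart i ⁻¹' U)

/-- `f` has rank 1 at `x` if its derivative in some chart through `x` is nonzero. -/
def OneManifoldCr.RankOneAt (A : OneManifoldCr r V) (f : V → ℝ) (x : V) : Prop :=
  ∃ i t, A.chart i t = x ∧ deriv (f ∘ A.chart i) t ≠ 0

/-- The structure is regular if every `C^r` function defined on a neighborhood of a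
point coincides, near that point, with a globally defined `C^r` function. -/
def OneManifoldCr.Regular (A : OneManifoldCr r V) : Prop :=
  ∀ (x : V) (U : Set V) (f : V → ℝ), IsOpen U → x ∈ U → A.IsCrOn f U →
    ∃ g : V → ℝ, A.IsCrMap g ∧ ∃ W : Set V, IsOpen W ∧ x ∈ W ∧ Set.EqOn f g W

/-! The proof builds a global coordinate. Near every point, a chart yields a monotone `C^r`
function rising from `0` to `1` across a small interval, with nonzero derivative in charts near
that point. Countably many such steps, locally finite and with their rank-one regions covering
`ℝ`, are summed with summable weights. All steps being monotone, their chart derivatives never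
cancel, so the sum `φ` is a strictly increasing `C^r` function of rank one everywhere, whose range
is a bounded interval `(a, b)`. Composing with a rescaled `tan : (a, b) → ℝ` gives `ψ`, and the
inverse function theorem, applied to `ψ` read in each chart, makes `ψ⁻¹` `C^r`. -/

open Set Function Topology Filter Real

lemma injective_of_deriv_ne_zero {F : ℝ → ℝ} (hF : Differentiable ℝ F) (hd : ∀ t, deriv F t ≠ 0) :
    Injective F := by
  have rolle {a b : ℝ} (hab : a < b) (h : F a = F b) : False := by
    obtain ⟨c, -, hc⟩ := exists_deriv_eq_zero hab hF.continuous.continuousOn h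
    exact hd c hc
  intro a b h
  rcases lt_trichotomy a b with hab | hab | hab
  exacts [(rolle hab h).elim, hab, (rolle hab h.symm).elim]

lemma contDiffOn_invFun_range_of_deriv_ne_zero {n : WithTop ℕ∞} {F : ℝ → ℝ} (hn : n ≠ 0)
    (hF : ContDiff ℝ n F) (hd : ∀ t, deriv F t ≠ 0) : ContDiffOn ℝ n (invFun F) (range F) := by
  have hstrict (t : ℝ) : HasStrictDerivAt F (deriv F t) t := hF.contDiffAt.hasStrictDerivAt hn
  have hinj := injective_of_deriv_ne_zero (hF.differentiable hn) hd
  have hemb : IsOpenEmbedding F := .of_continuous_injective_isOpenMap hF.continuous hinj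
    (isOpenMap_of_hasStrictDerivAt hstrict hd)
  set P := hemb.toOpenPartialHomeomorph F
  have hleft (s : ℝ) : P.symm (F s) = s := hemb.toOpenPartialHomeomorph_left_inv F
  rintro _ ⟨t, rfl⟩
  have hP : ContDiffAt ℝ n P.symm (F t) := by
    refine P.contDiffAt_symm_deriv (hd t) ?_ ?_ ?_
    · rw [hemb.toOpenPartialHomeomorph_target]; exact mem_range_self t
    · rw [hleft]; exact (hstrict t).hasDerivAt
    · rw [hleft]; exact hF.contDiffAt
  refine (hP.congr_of_eventuallyEq ?_).contDiffWithinAt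
  filter_upwards [hemb.isOpen_range.mem_nhds (mem_range_self t)] with y hy
  obtain ⟨s, rfl⟩ := hy
  rw [leftInverse_invFun hinj s, hleft]

lemma deriv_sum_comp_ne_zero {ι : Type*} {S : Finset ι} {g : ι → ℝ → ℝ} {c : ℝ → ℝ} {t : ℝ}
    {i₀ : ι} (hc : StrictMono c ∨ StrictAnti c) (hg : ∀ i ∈ S, Monotone (g i))
    (hd : ∀ i ∈ S, DifferentiableAt ℝ (g i ∘ c) t) (hi₀ : i₀ ∈ S)
    (h : deriv (g i₀ ∘ c) t ≠ 0) : deriv (fun u => ∑ i ∈ S, g i (c u)) t ≠ 0 := by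
  change deriv (fun u => ∑ i ∈ S, (g i ∘ c) u) t ≠ 0
  rw [deriv_fun_sum hd]
  intro hsum
  rcases hc with hc | hc
  · exact h ((Finset.sum_eq_zero_iff_of_nonneg fun i hi =>
      ((hg i hi).comp hc.monotone).deriv_nonneg).1 hsum i₀ hi₀)
  · exact h ((Finset.sum_eq_zero_iff_of_nonpos fun i hi =>
      ((hg i hi).comp_antitone hc.antitone).deriv_nonpos).1 hsum i₀ hi₀)

lemma StrictMono.range_eq_Ioo_csInf_csSup {f : ℝ → ℝ} (hf : StrictMono f) (hc : Continuous f)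
    (h₁ : BddBelow (range f)) (h₂ : BddAbove (range f)) :
    range f = Ioo (sInf (range f)) (sSup (range f)) := by
  refine subset_antisymm ?_ ((isConnected_range hc).Ioo_csInf_csSup_subset h₁ h₂)
  rintro _ ⟨x, rfl⟩
  exact ⟨(csInf_le h₁ (mem_range_self (x - 1))).trans_lt (hf (by linarith)),
    (hf (by linarith)).trans_le (le_csSup h₂ (mem_range_self (x + 1)))⟩

lemma exists_bijOn_Ioo_univ {a b : ℝ} (hab : a < b) (n : WithTop ℕ∞) :
    ∃ g : ℝ → ℝ, BijOn g (Ioo a b) univ ∧ ∀ y ∈ Ioo a b, ContDiffAt ℝ n g y ∧ deriv g y ≠ 0 := by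
  set k := π / (b - a)
  have hk : 0 < k := div_pos pi_pos (sub_pos.2 hab)
  set α : ℝ → ℝ := fun y => k * (y - a) - π / 2
  have hα (y : ℝ) : HasDerivAt α k y := by
    have := (((hasDerivAt_id y).sub_const a).const_mul k).sub_const (π / 2)
    rwa [mul_one] at this
  have hαmem {y : ℝ} (hy : y ∈ Ioo a b) : α y ∈ Ioo (-(π / 2)) (π / 2) := by
    have hkb : k * (b - a) = π := div_mul_cancel₀ _ (sub_pos.2 hab).ne'
    have h₁ := mul_pos hk (sub_pos.2 hy.1)
    have h₂ := mul_lt_mul_of_pos_left (sub_lt_sub_right hy.2 a) hk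
    constructor <;> simp only [α] <;> linarith
  have hcos {y : ℝ} (hy : y ∈ Ioo a b) : cos (α y) ≠ 0 := (cos_pos_of_mem_Ioo (hαmem hy)).ne'
  refine ⟨tan ∘ α, ⟨fun _ _ => trivial, ?_, ?_⟩, fun y hy => ⟨?_, ?_⟩⟩
  · intro y hy z hz h
    have := injOn_tan (hαmem hy) (hαmem hz) h
    simpa [α, hk.ne'] using this
  · intro z _
    refine ⟨a + (arctan z + π / 2) / k, ⟨?_, ?_⟩, ?_⟩
    · have := neg_pi_div_two_lt_arctan z
      have : 0 < (arctan z + π / 2) / k := div_pos (by linarith) hk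
      linarith
    · rw [← lt_sub_iff_add_lt', div_lt_iff₀ hk]
      have := arctan_lt_pi_div_two z
      have hkb : (b - a) * k = π := by rw [mul_comm]; exact div_mul_cancel₀ _ (sub_pos.2 hab).ne'
      linarith
    · simp only [comp_apply, α, add_sub_cancel_left, mul_div_cancel₀ _ hk.ne', add_sub_cancel_right,
        tan_arctan]
  · have hαc : ContDiff ℝ n α := by simp only [α]; fun_prop
    exact (contDiffAt_tan.2 (hcos hy)).comp y hαc.contDiffAt
  · rw [((hasDerivAt_tan (hcos hy)).comp y (hα y)).deriv]
    exact mul_ne_zero (one_div_ne_zero (pow_ne_zero 2 (hcos hy))) hk.ne'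

lemma exists_smooth_step (n : ℕ∞) (a : ℝ) {δ : ℝ} (hδ : 0 < δ) :
    ∃ H : ℝ → ℝ, ContDiff ℝ n H ∧ Monotone H ∧
      EqOn H 0 (Iic (a - δ)) ∧ EqOn H 1 (Ici (a + δ)) ∧ deriv H a ≠ 0 := by
  -- a point where `smoothTransition` has slope `1`, by the mean value theorem
  obtain ⟨c, hc, hslope⟩ := exists_deriv_eq_slope smoothTransition zero_lt_one
    smoothTransition.continuous.continuousOn
    (smoothTransition.contDiff (n := 1).differentiable one_ne_zero).differentiableOn
  set L : ℝ → ℝ := fun u => (u - a) / δ + c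
  have hL (u : ℝ) : HasDerivAt L (1 / δ) u :=
    (((hasDerivAt_id u).sub_const a).div_const δ).add_const c
  refine ⟨smoothTransition ∘ L, smoothTransition.contDiff.comp (by fun_prop),
    smoothTransition.monotone.comp fun u v huv => by simp only [L]; gcongr,
    fun u hu => smoothTransition.zero_of_nonpos ?_, fun u hu => smoothTransition.one_of_one_le ?_,
    ?_⟩
  · have : (u - a) / δ ≤ -1 := by rw [div_le_iff₀ hδ]; linarith [mem_Iic.1 hu]
    linarith [hc.2]
  · have : 1 ≤ (u - a) / δ := by rw [le_div_iff₀ hδ]; linarith [mem_Ici.1 hu]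
    linarith [hc.1]
  · have hs : DifferentiableAt ℝ smoothTransition (L a) :=
      smoothTransition.contDiffAt (n := 1).differentiableAt one_ne_zero
    rw [(hs.hasDerivAt.comp a (hL a)).deriv]
    simp [L, hslope, smoothTransition.one, hδ.ne']

lemma exists_monotone_comp_eq {c G : ℝ → ℝ} {a b : ℝ} (hc : StrictMono c) (hcont : Continuous c)
    (hG : Monotone G) (hab : a ≤ b) (h₀ : EqOn G 0 (Iic a)) (h₁ : EqOn G 1 (Ici b)) :
    ∃ f : ℝ → ℝ, Monotone f ∧ f ∘ c = G ∧ EqOn f 0 (Iic (c a)) ∧ EqOn f 1 (Ici (c b)) := by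
  have hsub : Icc (c a) (c b) ⊆ range c :=
    (intermediate_value_Icc hab hcont.continuousOn).trans (image_subset_range _ _)
  set σ := (hc.orderIso c).symm
  have hσ (x : ℝ) (h : c x ∈ range c) : σ ⟨c x, h⟩ = x := σ.apply_symm_apply x
  have hcab : c a ≤ c b := hc.monotone hab
  set f := IccExtend hcab (G ∘ σ ∘ inclusion hsub)
  have hf₀ : EqOn f 0 (Iic (c a)) := fun y hy => by
    simp [f, IccExtend_of_le_left _ _ (mem_Iic.1 hy), hσ, h₀ (mem_Iic.2 le_rfl)]
  have hf₁ : EqOn f 1 (Ici (c b)) := fun y hy => by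
    simp [f, IccExtend_of_right_le _ _ (mem_Ici.1 hy), hσ, h₁ (mem_Ici.2 le_rfl)]
  have hfm : Monotone f :=
    (hG.comp <| σ.monotone.comp fun _ _ h => (inclusion_le_inclusion hsub).2 h).IccExtend _
  refine ⟨f, hfm, funext fun u => ?_, hf₀, hf₁⟩
  rcases le_or_gt u a with hu | hu
  · rw [comp_apply, hf₀ (hc.monotone hu), h₀ hu, Pi.zero_apply, Pi.zero_apply]
  rcases le_or_gt b u with hu' | hu'
  · rw [comp_apply, hf₁ (hc.monotone hu'), h₁ hu', Pi.one_apply, Pi.one_apply]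
  simp [f, IccExtend_of_mem _ _ ⟨hc.monotone hu.le, hc.monotone hu'.le⟩, hσ]

lemma eventuallyEq_of_eqOn_Iic_of_eqOn_Ici {f : ℝ → ℝ} {a b y : ℝ} (h₀ : EqOn f 0 (Iic a))
    (h₁ : EqOn f 1 (Ici b)) (hy : y ∉ Icc a b) : f =ᶠ[𝓝 y] fun _ => f y := by
  rcases not_and_or.1 hy with hy | hy
  · filter_upwards [Iio_mem_nhds (not_le.1 hy)] with z hz
    rw [h₀ (mem_Iic.2 (le_of_lt hz)), h₀ (mem_Iic.2 (not_le.1 hy).le)]; rfl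
  · filter_upwards [Ioi_mem_nhds (not_le.1 hy)] with z hz
    rw [h₁ (mem_Ici.2 (le_of_lt hz)), h₁ (mem_Ici.2 (not_le.1 hy).le)]; rfl

namespace OneManifoldCr

variable (A : OneManifoldCr r ℝ)

lemma continuous_chart (i : A.ι) : Continuous (A.chart i) := (A.openEmb i).continuous

lemma injective_chart (i : A.ι) : Injective (A.chart i) := (A.openEmb i).injective

lemma strictMono_or_strictAnti_chart (i : A.ι) :
    StrictMono (A.chart i) ∨ StrictAnti (A.chart i) :=
  (A.continuous_chart i).strictMono_of_inj (A.injective_chart i)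

lemma exists_strictMono_chart_mul (i : A.ι) :
    ∃ ε : ℝ, ε * ε = 1 ∧ StrictMono fun u => A.chart i (ε * u) := by
  rcases A.strictMono_or_strictAnti_chart i with h | h
  · exact ⟨1, one_mul 1, by simpa using h⟩
  · exact ⟨-1, by norm_num, fun u v huv => by simpa using h (neg_lt_neg huv)⟩

variable {A}

lemma preimage_range_chart_mem_nhds {i j : A.ι} {t : ℝ} (h : A.chart j t ∈ range (A.chart i)) :
    A.chart j ⁻¹' range (A.chart i) ∈ 𝓝 t :=
  ((A.openEmb i).isOpen_range.preimage (A.continuous_chart j)).mem_nhds h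

lemma contDiffAt_transition {i j : A.ι} {t : ℝ} (h : A.chart j t ∈ range (A.chart i)) :
    ContDiffAt ℝ r (invFun (A.chart i) ∘ A.chart j) t :=
  (A.compat j i).contDiffAt (preimage_range_chart_mem_nhds h)

lemma chart_comp_transition_eventuallyEq {i j : A.ι} {t : ℝ}
    (h : A.chart j t ∈ range (A.chart i)) :
    A.chart i ∘ (invFun (A.chart i) ∘ A.chart j) =ᶠ[𝓝 t] A.chart j := by
  filter_upwards [preimage_range_chart_mem_nhds h] with s hs using invFun_eq hs

lemma deriv_transition_ne_zero (hr : 1 ≤ r) {i j : A.ι} {t : ℝ}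
    (h : A.chart j t ∈ range (A.chart i)) : deriv (invFun (A.chart i) ∘ A.chart j) t ≠ 0 := by
  have hr' : (r : WithTop ℕ∞) ≠ 0 := mod_cast Order.one_le_iff_ne_zero.1 hr
  have hτ := (chart_comp_transition_eventuallyEq h).self_of_nhds
  have hback : (invFun (A.chart j) ∘ A.chart i) ∘ (invFun (A.chart i) ∘ A.chart j) =ᶠ[𝓝 t] id := by
    filter_upwards [chart_comp_transition_eventuallyEq h] with s hs
    simp only [comp_apply] at hs ⊢
    rw [hs, leftInverse_invFun (A.injective_chart j), id]
  have hchain := deriv_comp t ((contDiffAt_transition (i := j) ⟨t, hτ.symm⟩).differentiableAt hr')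
    ((contDiffAt_transition h).differentiableAt hr')
  rw [hback.deriv_eq, deriv_id] at hchain
  exact right_ne_zero_of_mul (hchain ▸ one_ne_zero)

variable {f g : ℝ → ℝ} {x : ℝ}

lemma IsCrMap.differentiable (hr : 1 ≤ r) (hf : A.IsCrMap f) (i : A.ι) :
    Differentiable ℝ (f ∘ A.chart i) :=
  (hf i).differentiable (mod_cast Order.one_le_iff_ne_zero.1 hr)

lemma IsCrMap.continuous (hf : A.IsCrMap f) : Continuous f := by
  refine continuous_iff_continuousAt.2 fun x => ?_
  obtain ⟨i, t, rfl⟩ := A.cover x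
  exact (A.openEmb i).continuousAt_iff.1 (hf i).continuous.continuousAt

lemma IsCrMap.comp (hf : A.IsCrMap f) (hg : ∀ x, ContDiffAt ℝ r g (f x)) : A.IsCrMap (g ∘ f) :=
  fun i => contDiff_iff_contDiffAt.2 fun t => (hg _).comp (f := f ∘ A.chart i) t (hf i).contDiffAt

lemma isCrMap_of_contDiff_comp_chart {i : A.ι} {K : Set ℝ} (hf : ContDiff ℝ r (f ∘ A.chart i))
    (hK : K ⊆ range (A.chart i)) (hconst : ∀ y ∉ K, f =ᶠ[𝓝 y] fun _ => f y) : A.IsCrMap f := by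
  intro j
  refine contDiff_iff_contDiffAt.2 fun t => ?_
  by_cases h : A.chart j t ∈ range (A.chart i)
  · refine (hf.contDiffAt.comp t (contDiffAt_transition h)).congr_of_eventuallyEq ?_
    filter_upwards [chart_comp_transition_eventuallyEq h] with s hs
    simp only [comp_apply] at hs ⊢
    rw [hs]
  · refine (contDiffAt_const (c := f (A.chart j t))).congr_of_eventuallyEq ?_
    exact (hconst _ fun hK' => h (hK hK')).comp_tendsto (A.continuous_chart j).continuousAt

lemma not_rankOneAt_of_eventuallyEq {c : ℝ} (h : f =ᶠ[𝓝 x] fun _ => c) : ¬ A.RankOneAt f x := by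
  rintro ⟨i, t, rfl, hd⟩
  exact hd ((h.comp_tendsto (A.continuous_chart i).continuousAt).deriv_eq.trans (deriv_const t c))

lemma RankOneAt.deriv_ne_zero (hr : 1 ≤ r) (hf : A.IsCrMap f) (h : A.RankOneAt f x) {j : A.ι}
    {t : ℝ} (ht : A.chart j t = x) : deriv (f ∘ A.chart j) t ≠ 0 := by
  obtain ⟨i, s, hs, hd⟩ := h
  have hji : A.chart j t ∈ range (A.chart i) := ⟨s, hs.trans ht.symm⟩
  have hτ : invFun (A.chart i) (A.chart j t) = s := by
    rw [ht, ← hs, leftInverse_invFun (A.injective_chart i)]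
  have hloc : f ∘ A.chart j =ᶠ[𝓝 t] (f ∘ A.chart i) ∘ (invFun (A.chart i) ∘ A.chart j) := by
    filter_upwards [chart_comp_transition_eventuallyEq hji] with u hu
    simp only [comp_apply] at hu ⊢
    rw [hu]
  rw [hloc.deriv_eq, deriv_comp t _ ((contDiffAt_transition hji).differentiableAt
    (mod_cast Order.one_le_iff_ne_zero.1 hr))]
  · exact mul_ne_zero (by rwa [comp_apply, hτ]) (deriv_transition_ne_zero hr hji)
  · exact (hf.differentiable hr i).differentiableAt

lemma RankOneAt.comp (hr : 1 ≤ r) (hf : A.IsCrMap f) (h : A.RankOneAt f x)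
    (hg : DifferentiableAt ℝ g (f x)) (hg' : deriv g (f x) ≠ 0) : A.RankOneAt (g ∘ f) x := by
  obtain ⟨i, t, rfl, hd⟩ := h
  refine ⟨i, t, rfl, ?_⟩
  rw [comp_assoc, deriv_comp t hg ((hf.differentiable hr i).differentiableAt)]
  exact mul_ne_zero hg' hd

lemma IsCrMap.eventually_rankOneAt (hr : 1 ≤ r) (hf : A.IsCrMap f) {i : A.ι} {t : ℝ}
    (h : deriv (f ∘ A.chart i) t ≠ 0) : ∀ᶠ y in 𝓝 (A.chart i t), A.RankOneAt f y := by
  have hopen : IsOpen {s | deriv (f ∘ A.chart i) s ≠ 0} :=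
    isOpen_ne_fun ((hf i).continuous_deriv (mod_cast hr)) continuous_const
  filter_upwards [(A.openEmb i).isOpenMap.image_mem_nhds (hopen.mem_nhds h)]
  rintro _ ⟨s, hs, rfl⟩
  exact ⟨i, s, rfl, hs⟩

lemma strictMono_of_rankOneAt (hf : Monotone f) (h : ∀ x, A.RankOneAt f x) : StrictMono f := by
  intro x y hxy
  refine (hf hxy.le).lt_of_ne fun hfxy => not_rankOneAt_of_eventuallyEq (c := f x) ?_
    (h ((x + y) / 2))
  filter_upwards [Ioo_mem_nhds (by linarith : x < (x + y) / 2) (by linarith : (x + y) / 2 < y)]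
    with z hz
  exact le_antisymm (hfxy ▸ hf hz.2.le) (hf hz.1.le)

structure CrStep (A : OneManifoldCr r ℝ) where
  toFun : ℝ → ℝ
  left : ℝ
  right : ℝ
  monotone : Monotone toFun
  isCrMap : A.IsCrMap toFun
  eqOn_Iic : EqOn toFun 0 (Iic left)
  eqOn_Ici : EqOn toFun 1 (Ici right)

namespace CrStep

variable (s : A.CrStep)

lemma left_le_right : s.left ≤ s.right := by
  by_contra h
  have := (s.eqOn_Iic (mem_Iic.2 le_rfl)).symm.trans (s.eqOn_Ici (mem_Ici.2 (not_le.1 h).le))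
  exact zero_ne_one this

lemma mem_Icc_zero_one (x : ℝ) : s.toFun x ∈ Icc 0 1 :=
  ⟨(s.eqOn_Iic (mem_Iic.2 (min_le_right x s.left))).symm.trans_le (s.monotone (min_le_left _ _)),
    (s.monotone (le_max_left x s.right)).trans_eq (s.eqOn_Ici (mem_Ici.2 (le_max_right _ _)))⟩

lemma mem_Icc_of_rankOneAt (h : A.RankOneAt s.toFun x) : x ∈ Icc s.left s.right :=
  by_contra fun hx => not_rankOneAt_of_eventuallyEq
    (eventuallyEq_of_eqOn_Iic_of_eqOn_Ici s.eqOn_Iic s.eqOn_Ici hx) h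

lemma eqOn_of_isPreconnected {V : Set ℝ} (hV : IsPreconnected V)
    (hdisj : Disjoint V (Icc s.left s.right)) {y : ℝ} (hy : y ∈ V) :
    EqOn s.toFun (fun _ => s.toFun y) V := by
  have hcover : V ⊆ Iio s.left ∪ Ioi s.right := fun z hz => by
    by_contra h
    simp only [mem_union, mem_Iio, mem_Ioi, not_or, not_lt] at h
    exact disjoint_left.1 hdisj hz h
  have hdisj' : Disjoint (Iio s.left) (Ioi s.right) :=
    disjoint_left.2 fun z h₁ h₂ => (lt_asymm h₁ (s.left_le_right.trans_lt h₂)).elim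
  rcases hV.subset_or_subset isOpen_Iio isOpen_Ioi hdisj' hcover with h | h
  · exact fun z hz => by rw [s.eqOn_Iic (Iio_subset_Iic_self (h hz)),
      s.eqOn_Iic (Iio_subset_Iic_self (h hy))]; rfl
  · exact fun z hz => by rw [s.eqOn_Ici (Ioi_subset_Ici_self (h hz)),
      s.eqOn_Ici (Ioi_subset_Ici_self (h hy))]; rfl

end CrStep

lemma exists_crStep (hr : 1 ≤ r) {x : ℝ} {W : Set ℝ} (hW : W ∈ 𝓝 x) :
    ∃ s : A.CrStep, Icc s.left s.right ⊆ W ∧ ∀ᶠ y in 𝓝 x, A.RankOneAt s.toFun y := by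
  obtain ⟨i, t, rfl⟩ := A.cover x
  obtain ⟨ε, hε, hmono⟩ := A.exists_strictMono_chart_mul i
  set c : ℝ → ℝ := fun u => A.chart i (ε * u)
  have hc : Continuous c := (A.continuous_chart i).comp (continuous_const_mul ε)
  have hct : c (ε * t) = A.chart i t := by simp only [c, ← mul_assoc, hε, one_mul]
  obtain ⟨δ, hδ, hball⟩ := Metric.nhds_basis_closedBall.mem_iff.1
    (hc.continuousAt.preimage_mem_nhds (hct ▸ hW))
  obtain ⟨H, hHc, hHm, hH₀, hH₁, hH'⟩ := exists_smooth_step r (ε * t) hδ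
  obtain ⟨f, hfm, hfc, hf₀, hf₁⟩ :=
    exists_monotone_comp_eq hmono hc hHm (by linarith) hH₀ hH₁
  have hchart : f ∘ A.chart i = H ∘ (ε * ·) := funext fun v => by
    rw [← hfc]
    change f (A.chart i v) = f (A.chart i (ε * (ε * v)))
    rw [← mul_assoc, hε, one_mul]
  have hIcc : Icc (c (ε * t - δ)) (c (ε * t + δ)) ⊆ c '' Metric.closedBall (ε * t) δ := by
    rw [Real.closedBall_eq_Icc]
    exact intermediate_value_Icc (by linarith) hc.continuousOn
  have hf : A.IsCrMap f :=
    isCrMap_of_contDiff_comp_chart (hchart ▸ hHc.comp (contDiff_const.mul contDiff_id))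
      (hIcc.trans (by rintro _ ⟨u, -, rfl⟩; exact mem_range_self _))
      (fun y hy => eventuallyEq_of_eqOn_Iic_of_eqOn_Ici hf₀ hf₁ hy)
  refine ⟨⟨f, _, _, hfm, hf, hf₀, hf₁⟩, hIcc.trans (image_subset_iff.2 hball),
    hf.eventually_rankOneAt hr ?_⟩
  have hH : HasDerivAt H (deriv H (ε * t)) (ε * t) :=
    (hHc.differentiable (mod_cast Order.one_le_iff_ne_zero.1 hr) _).hasDerivAt
  rw [hchart, (hH.comp t ((hasDerivAt_id t).const_mul ε)).deriv]
  exact mul_ne_zero hH' (by simpa using left_ne_zero_of_mul_eq_one hε)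

lemma exists_finset_crStep (hr : 1 ≤ r) {K W : Set ℝ} (hK : IsCompact K) (hW : IsOpen W)
    (hKW : K ⊆ W) :
    ∃ T : Finset A.CrStep, (∀ s ∈ T, Icc s.left s.right ⊆ W) ∧
      ∀ x ∈ K, ∃ s ∈ T, A.RankOneAt s.toFun x := by
  classical
  choose s hsW hsx using fun x : K => exists_crStep (A := A) hr (hW.mem_nhds (hKW x.2))
  obtain ⟨t, ht⟩ := hK.elim_nhds_subcover' (fun x hx => {y | A.RankOneAt (s ⟨x, hx⟩).toFun y})
    (fun x hx => hsx ⟨x, hx⟩)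
  refine ⟨t.image s, fun s' hs' => ?_, fun x hx => ?_⟩
  · obtain ⟨y, -, rfl⟩ := Finset.mem_image.1 hs'
    exact hsW y
  obtain ⟨y, hyt, hxy⟩ := mem_iUnion₂.1 (ht hx)
  exact ⟨s y, Finset.mem_image_of_mem s hyt, hxy⟩

lemma exists_locallyFinite_crSteps (hr : 1 ≤ r) :
    ∃ (ι : Type) (s : ι → A.CrStep), Countable ι ∧
      LocallyFinite (fun n => Icc (s n).left (s n).right) ∧
      ∀ x, ∃ n, A.RankOneAt (s n).toFun x := by
  choose T hTW hT using fun m : ℤ => exists_finset_crStep (A := A) hr isCompact_Icc isOpen_Ioo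
    (Icc_subset_Ioo (by linarith : (m : ℝ) - 1 < m) (by linarith : (m : ℝ) + 1 < m + 2))
  refine ⟨Σ m : ℤ, T m, fun n => n.2.1, inferInstance, fun x => ?_, fun x => ?_⟩
  · refine ⟨Ioo (x - 1) (x + 1), Ioo_mem_nhds (by linarith) (by linarith), ?_⟩
    have hfin : (Sigma.fst ⁻¹' Icc (⌊x⌋ - 2) (⌊x⌋ + 2) : Set (Σ m : ℤ, T m)).Finite :=
      (finite_Icc _ _).preimage' fun m _ => range_sigmaMk m ▸ finite_range _
    refine hfin.subset ?_
    rintro ⟨m, s, hs⟩ ⟨y, hy, hyx⟩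
    obtain ⟨hm₁, hm₂⟩ := hTW m s hs hy
    have h₁ : m - 2 ≤ ⌊x⌋ := Int.le_floor.2 (by push_cast; linarith [hyx.2])
    have h₂ : ⌊x⌋ < m + 3 := Int.floor_lt.2 (by push_cast; linarith [hyx.1])
    exact show m ∈ Icc (⌊x⌋ - 2) (⌊x⌋ + 2) from ⟨by omega, by omega⟩
  · obtain ⟨s, hs, hx⟩ := hT ⌊x⌋ x ⟨Int.floor_le x, (Int.lt_floor_add_one x).le⟩
    exact ⟨⟨⌊x⌋, s, hs⟩, hx⟩

section WeightedSum

variable {ι : Type*} {s : ι → A.CrStep} {w : ι → ℝ}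

lemma summable_mul_crStep (hw : Summable w) (hw₀ : ∀ n, 0 ≤ w n) (x : ℝ) :
    Summable fun n => w n * (s n).toFun x :=
  hw.of_nonneg_of_le (fun n => mul_nonneg (hw₀ n) ((s n).mem_Icc_zero_one x).1)
    (fun n => mul_le_of_le_one_right (hw₀ n) ((s n).mem_Icc_zero_one x).2)

lemma exists_eventually_tsum_eq_sum_add_const (hw : Summable w) (hw₀ : ∀ n, 0 ≤ w n)
    (hfin : LocallyFinite fun n => Icc (s n).left (s n).right) (x : ℝ) :
    ∃ S : Finset ι, (∀ n, A.RankOneAt (s n).toFun x → n ∈ S) ∧ ∃ C : ℝ,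
      (fun y => ∑' n, w n * (s n).toFun y) =ᶠ[𝓝 x] fun y => ∑ n ∈ S, w n * (s n).toFun y + C := by
  obtain ⟨V, hV, hVfin⟩ := hfin x
  obtain ⟨ε, hε, hball⟩ := Metric.mem_nhds_iff.1 hV
  refine ⟨hVfin.toFinset, fun n hn => hVfin.mem_toFinset.2
    ⟨x, (s n).mem_Icc_of_rankOneAt hn, mem_of_mem_nhds hV⟩,
    ∑' n : ↑((hVfin.toFinset : Set ι)ᶜ), w n * (s n).toFun x, ?_⟩
  filter_upwards [Metric.ball_mem_nhds x hε] with y hy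
  rw [← (summable_mul_crStep hw hw₀ y).sum_add_tsum_compl]
  congr 1
  refine tsum_congr fun ⟨n, hn⟩ => ?_
  have hdisj : Disjoint (Metric.ball x ε) (Icc (s n).left (s n).right) :=
    disjoint_left.2 fun z hz hz' => hn (hVfin.mem_toFinset.2 ⟨z, hz', hball hz⟩)
  rw [(s n).eqOn_of_isPreconnected (convex_ball x ε).isPreconnected hdisj
    (Metric.mem_ball_self hε) hy]

lemma isCrMap_tsum_mul_crStep (hw : Summable w) (hw₀ : ∀ n, 0 ≤ w n)
    (hfin : LocallyFinite fun n => Icc (s n).left (s n).right) :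
    A.IsCrMap fun x => ∑' n, w n * (s n).toFun x := by
  refine fun j => contDiff_iff_contDiffAt.2 fun t => ?_
  obtain ⟨S, -, C, hC⟩ := exists_eventually_tsum_eq_sum_add_const hw hw₀ hfin (A.chart j t)
  have hsum : ContDiff ℝ r fun u => ∑ n ∈ S, w n * (s n).toFun (A.chart j u) + C :=
    (ContDiff.sum fun n _ => contDiff_const.mul ((s n).isCrMap j)).add contDiff_const
  exact hsum.contDiffAt.congr_of_eventuallyEq (hC.comp_tendsto (A.continuous_chart j).continuousAt)

lemma rankOneAt_tsum_mul_crStep (hr : 1 ≤ r) (hw : Summable w) (hw₀ : ∀ n, 0 < w n)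
    (hfin : LocallyFinite fun n => Icc (s n).left (s n).right)
    (hrank : ∀ x, ∃ n, A.RankOneAt (s n).toFun x) (x : ℝ) :
    A.RankOneAt (fun x => ∑' n, w n * (s n).toFun x) x := by
  obtain ⟨i, t, rfl⟩ := A.cover x
  obtain ⟨n₀, hn₀⟩ := hrank (A.chart i t)
  obtain ⟨S, hS, C, hC⟩ :=
    exists_eventually_tsum_eq_sum_add_const hw (fun n => (hw₀ n).le) hfin (A.chart i t)
  have hd (n : ι) : DifferentiableAt ℝ ((s n).toFun ∘ A.chart i) t :=
    ((s n).isCrMap.differentiable hr i).differentiableAt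
  refine ⟨i, t, rfl, ?_⟩
  rw [(hC.comp_tendsto (A.continuous_chart i).continuousAt).deriv_eq]
  change deriv (fun u => ∑ n ∈ S, w n * (s n).toFun (A.chart i u) + C) t ≠ 0
  rw [deriv_add_const]
  refine deriv_sum_comp_ne_zero (A.strictMono_or_strictAnti_chart i)
    (fun n _ => (s n).monotone.const_mul (hw₀ n).le) (fun n _ => (hd n).const_mul (w n))
    (hS n₀ hn₀) ?_
  change deriv (fun u => w n₀ * ((s n₀).toFun ∘ A.chart i) u) t ≠ 0
  rw [deriv_const_mul _ (hd n₀)]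
  exact mul_ne_zero (hw₀ n₀).ne' (hn₀.deriv_ne_zero hr (s n₀).isCrMap rfl)

end WeightedSum

lemma exists_strictMono_isCrMap_rankOneAt (hr : 1 ≤ r) :
    ∃ φ : ℝ → ℝ, StrictMono φ ∧ BddBelow (range φ) ∧ BddAbove (range φ) ∧ A.IsCrMap φ ∧
      ∀ x, A.RankOneAt φ x := by
  obtain ⟨ι, s, _, hfin, hrank⟩ := exists_locallyFinite_crSteps (A := A) hr
  obtain ⟨k, hk⟩ := exists_injective_nat ι
  set w : ι → ℝ := fun n => (1 / 2) ^ k n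
  have hw₀ (n : ι) : 0 < w n := by positivity
  have hw : Summable w := summable_geometric_two.comp_injective hk
  have hsum := summable_mul_crStep (s := s) hw fun n => (hw₀ n).le
  have hrank' := rankOneAt_tsum_mul_crStep hr hw hw₀ hfin hrank
  refine ⟨_, strictMono_of_rankOneAt (fun x y hxy => ?_) hrank', ⟨0, ?_⟩, ⟨∑' n, w n, ?_⟩,
    isCrMap_tsum_mul_crStep hw (fun n => (hw₀ n).le) hfin, hrank'⟩
  · exact (hsum x).tsum_le_tsum (fun n => mul_le_mul_of_nonneg_left ((s n).monotone hxy) (hw₀ n).le)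
      (hsum y)
  · rintro _ ⟨x, rfl⟩
    exact tsum_nonneg fun n => mul_nonneg (hw₀ n).le ((s n).mem_Icc_zero_one x).1
  · rintro _ ⟨x, rfl⟩
    exact (hsum x).tsum_le_tsum
      (fun n => mul_le_of_le_one_right (hw₀ n).le ((s n).mem_Icc_zero_one x).2) hw

lemma exists_bijective_isCrMap_rankOneAt (hr : 1 ≤ r) :
    ∃ ψ : ℝ → ℝ, Bijective ψ ∧ A.IsCrMap ψ ∧ ∀ x, A.RankOneAt ψ x := by
  obtain ⟨φ, hφ, hbdd₁, hbdd₂, hφr, hrank⟩ := exists_strictMono_isCrMap_rankOneAt (A := A) hr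
  have hrange := hφ.range_eq_Ioo_csInf_csSup hφr.continuous hbdd₁ hbdd₂
  have hmem (x : ℝ) : φ x ∈ Ioo (sInf (range φ)) (sSup (range φ)) := hrange ▸ mem_range_self x
  obtain ⟨g, hg, hgd⟩ := exists_bijOn_Ioo_univ (nonempty_Ioo.1 ⟨_, hmem 0⟩) r
  have hφbij : BijOn φ univ (Ioo (sInf (range φ)) (sSup (range φ))) :=
    ⟨fun x _ => hmem x, hφ.injective.injOn, hrange ▸ image_univ (f := φ) ▸ surjOn_image φ univ⟩
  refine ⟨g ∘ φ, bijOn_univ.1 (hg.comp hφbij), hφr.comp fun x => (hgd _ (hmem x)).1,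
    fun x => (hrank x).comp hr hφr ?_ (hgd _ (hmem x)).2⟩
  exact (hgd _ (hmem x)).1.differentiableAt (mod_cast Order.one_le_iff_ne_zero.1 hr)

end OneManifoldCr

/-- Every `C^r` differentiable structure on the topological space `ℝ` is
`C^r`-diffeomorphic to the standard one: there is a bijection `ψ : ℝ → ℝ` which is
`C^r` read in the charts of the given structure, and whose inverse is `C^r` as a map
from standard `ℝ` back to the structured `ℝ`. -/
theorem real_cr_structure_unique {r : ℕ∞} (hr : 1 ≤ r) (A : OneManifoldCr r ℝ) :
    ∃ ψ : ℝ → ℝ, Function.Bijective ψ ∧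
      (∀ i, ContDiff ℝ r (ψ ∘ A.chart i)) ∧
      (∀ i, ContDiffOn ℝ r (Function.invFun (A.chart i) ∘ Function.invFun ψ)
        (ψ '' Set.range (A.chart i))) := by
  obtain ⟨ψ, hψ, hψr, hrank⟩ := A.exists_bijective_isCrMap_rankOneAt hr
  refine ⟨ψ, hψ, hψr, fun i => ?_⟩
  have hinv := contDiffOn_invFun_range_of_deriv_ne_zero
    (mod_cast Order.one_le_iff_ne_zero.1 hr) (hψr i)
    fun t => (hrank _).deriv_ne_zero hr hψr rfl
  rw [← range_comp]
  refine hinv.congr ?_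
  rintro _ ⟨t, rfl⟩
  simp only [comp_apply, leftInverse_invFun hψ.injective _]
  exact (leftInverse_invFun (A.injective_chart i) t).trans
    (leftInverse_invFun (hψ.injective.comp (A.injective_chart i)) t).symm
end

section
/- Define on the quotient E of ℝ² ⊔ ℝ² by identifying (x₁,y₁) in the first copy with (x₂,y₂) = (x₁ + 1/y₁, y₁³) in the second copy whenever y₁ < 0: this identification is an open equivalence relation whose quotient E is a 2-dimensional topological manifold, and the horizontal foliation (leaves y = const in each chart) descends to a foliation of E whose leaf space is the simple branching with the non-regular 'cubed' differentiable structure. -/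
/-- The gluing relation on `ℝ² ⊔ ℝ²` identifying `(x, y)` in the first copy with
`(x + 1/y, y³)` in the second copy whenever `y < 0`. -/
def wazRel : ((ℝ × ℝ) ⊕ (ℝ × ℝ)) → ((ℝ × ℝ) ⊕ (ℝ × ℝ)) → Prop :=
  fun a b => ∃ x y : ℝ, y < 0 ∧ a = Sum.inl (x, y) ∧ b = Sum.inr (x + 1 / y, y ^ 3)

/-- The glued surface `E`. -/
def WazSurface : Type := Quot wazRel

instance : TopologicalSpace WazSurface := by unfold WazSurface; infer_instance

/-- A (possibly non-Hausdorff) 2-dimensional topological manifold. -/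
def IsTopManifold2 (V : Type*) [TopologicalSpace V] : Prop :=
  ∀ x : V, ∃ U : Set V, IsOpen U ∧ x ∈ U ∧ Nonempty (U ≃ₜ (ℝ × ℝ))

/-- The gluing map `φ(x, y) = (x + 1/y, y³)`. -/
noncomputable def wazGlue : ℝ × ℝ → ℝ × ℝ := fun p => (p.1 + 1 / p.2, p.2 ^ 3)

/-- The relation identifying whole horizontal leaves: gluing together with the
horizontal (same copy, same `y`) relation. -/
def wazLeafRel : ((ℝ × ℝ) ⊕ (ℝ × ℝ)) → ((ℝ × ℝ) ⊕ (ℝ × ℝ)) → Prop :=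
  fun a b => wazRel a b ∨
    (∃ x x' y : ℝ, a = Sum.inl (x, y) ∧ b = Sum.inl (x', y)) ∨
    (∃ x x' y : ℝ, a = Sum.inr (x, y) ∧ b = Sum.inr (x', y))

/-- The leaf space of the horizontal foliation of the glued surface. -/
def WazLeafSpace : Type := Quot wazLeafRel

instance : TopologicalSpace WazLeafSpace := by unfold WazLeafSpace; infer_instance

/-- The "cubed" simple branching: glue two copies of `ℝ` identifying `y` in the first
copy with `y³` in the second copy for `y < 0`; this is the leaf space carrying the
non-regular cubed differentiable structure. -/
def cubedRel : (ℝ ⊕ ℝ) → (ℝ ⊕ ℝ) → Prop :=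
  fun a b => ∃ y : ℝ, y < 0 ∧ a = Sum.inl y ∧ b = Sum.inr (y ^ 3)

instance : TopologicalSpace (Quot cubedRel) := by infer_instance

/-! ### Auxiliary material -/

/-- A cube root, suitable for negative arguments. -/
noncomputable def wazCbrt (v : ℝ) : ℝ := -((-v) ^ ((3:ℝ)⁻¹))

lemma wazCbrt_continuous : Continuous wazCbrt :=
  ((Real.continuous_rpow_const (by norm_num)).comp continuous_neg).neg

lemma wazCbrt_cube {y : ℝ} (hy : y < 0) : wazCbrt (y ^ 3) = y := by
  unfold wazCbrt
  have h : -(y ^ 3) = (-y) ^ 3 := by ring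
  rw [h, ← Real.rpow_natCast (-y) 3, ← Real.rpow_mul (by linarith)]
  norm_num

lemma wazCbrt_neg {v : ℝ} (hv : v < 0) : wazCbrt v < 0 := by
  have : (0:ℝ) < (-v) ^ ((3:ℝ)⁻¹) := Real.rpow_pos_of_pos (by linarith) _
  unfold wazCbrt; linarith

lemma cube_wazCbrt {v : ℝ} (hv : v < 0) : (wazCbrt v) ^ 3 = v := by
  unfold wazCbrt
  have h : (-((-v) ^ ((3:ℝ)⁻¹))) ^ 3 = -(((-v) ^ ((3:ℝ)⁻¹)) ^ 3) := by ring
  rw [h, ← Real.rpow_natCast ((-v) ^ ((3:ℝ)⁻¹)) 3, ← Real.rpow_mul (by linarith)]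
  norm_num

lemma cube_inj : Function.Injective (fun y : ℝ => y ^ 3) :=
  (Odd.strictMono_pow (R := ℝ) ⟨1, by norm_num⟩).injective

lemma wazGlue_inj : Function.Injective wazGlue := by
  intro p q h
  unfold wazGlue at h
  have h2 : p.2 = q.2 := cube_inj (congrArg Prod.snd h)
  have h1 : p.1 + 1 / p.2 = q.1 + 1 / q.2 := congrArg Prod.fst h
  rw [h2] at h1
  exact Prod.ext (by linarith) h2

/-- The inverse of the gluing map on the lower half plane. -/
noncomputable def wazInv : ℝ × ℝ → ℝ × ℝ := fun p => (p.1 - 1 / wazCbrt p.2, wazCbrt p.2)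

lemma wazInv_glue {p : ℝ × ℝ} (h : p.2 < 0) : wazInv (wazGlue p) = p := by
  unfold wazInv wazGlue
  simp only [wazCbrt_cube h]
  exact Prod.ext (by ring) rfl

lemma wazGlue_wazInv {p : ℝ × ℝ} (h : p.2 < 0) : wazGlue (wazInv p) = p := by
  unfold wazInv wazGlue
  simp only [cube_wazCbrt h]
  exact Prod.ext (by ring) rfl

lemma wazInv_snd_lt {p : ℝ × ℝ} (h : p.2 < 0) : (wazInv p).2 < 0 := wazCbrt_neg h

lemma isOpen_lower : IsOpen {p : ℝ × ℝ | p.2 < 0} := isOpen_lt continuous_snd continuous_const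

lemma continuousOn_wazGlue : ContinuousOn wazGlue {p : ℝ × ℝ | p.2 < 0} := by
  apply ContinuousOn.prodMk
  · exact continuous_fst.continuousOn.add
      (continuousOn_const.div continuous_snd.continuousOn fun p hp => ne_of_lt hp)
  · exact (continuous_snd.pow 3).continuousOn

lemma continuousOn_wazInv : ContinuousOn wazInv {p : ℝ × ℝ | p.2 < 0} := by
  have hc : Continuous fun p : ℝ × ℝ => wazCbrt p.2 := wazCbrt_continuous.comp continuous_snd
  apply ContinuousOn.prodMk
  · exact continuous_fst.continuousOn.sub
      (continuousOn_const.div hc.continuousOn fun p hp => ne_of_lt (wazCbrt_neg hp))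
  · exact hc.continuousOn

/-- The symmetric-reflexive closure of `wazRel`. -/
def wazRel' (a b : (ℝ × ℝ) ⊕ (ℝ × ℝ)) : Prop := a = b ∨ wazRel a b ∨ wazRel b a

lemma wazRel_iff {a b : (ℝ × ℝ) ⊕ (ℝ × ℝ)} :
    wazRel a b ↔ ∃ p : ℝ × ℝ, p.2 < 0 ∧ a = Sum.inl p ∧ b = Sum.inr (wazGlue p) := by
  constructor
  · rintro ⟨x, y, hy, rfl, rfl⟩; exact ⟨(x, y), hy, rfl, rfl⟩
  · rintro ⟨p, hp, rfl, rfl⟩; exact ⟨p.1, p.2, hp, rfl, rfl⟩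

lemma wazRel'_equivalence : Equivalence wazRel' := by
  constructor
  · intro a; exact Or.inl rfl
  · intro a b h
    rcases h with rfl | h | h
    · exact Or.inl rfl
    · exact Or.inr (Or.inr h)
    · exact Or.inr (Or.inl h)
  · intro a b c hab hbc
    rcases hab with rfl | hab | hab
    · exact hbc
    · rcases hbc with rfl | hbc | hbc
      · exact Or.inr (Or.inl hab)
      · rw [wazRel_iff] at hab hbc
        obtain ⟨p, _, _, rfl⟩ := hab
        obtain ⟨q, _, h, _⟩ := hbc
        exact absurd h (by simp)
      · rw [wazRel_iff] at hab hbc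
        obtain ⟨p, _, rfl, hb⟩ := hab
        obtain ⟨q, _, hc, hb'⟩ := hbc
        rw [hb'] at hb
        obtain rfl : q = p := wazGlue_inj (Sum.inr.inj hb)
        exact Or.inl hc.symm
    · rcases hbc with rfl | hbc | hbc
      · exact Or.inr (Or.inr hab)
      · rw [wazRel_iff] at hab hbc
        obtain ⟨p, _, hb, rfl⟩ := hab
        obtain ⟨q, _, hb', rfl⟩ := hbc
        rw [hb'] at hb
        obtain rfl : q = p := Sum.inl.inj hb
        exact Or.inl rfl
      · rw [wazRel_iff] at hab hbc
        obtain ⟨p, _, hb, _⟩ := hab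
        obtain ⟨q, _, _, hb'⟩ := hbc
        rw [hb'] at hb
        exact absurd hb (by simp)

lemma quot_mk_eq_iff {a b : (ℝ × ℝ) ⊕ (ℝ × ℝ)} :
    Quot.mk wazRel a = Quot.mk wazRel b ↔ wazRel' a b := by
  constructor
  · intro h
    have h' := Quot.eqvGen_exact h
    clear h
    induction h' with
    | rel u v huv => exact Or.inr (Or.inl huv)
    | refl u => exact Or.inl rfl
    | symm u v _ ih => exact wazRel'_equivalence.symm ih
    | trans u v w _ _ ih1 ih2 => exact wazRel'_equivalence.trans ih1 ih2
  · rintro (rfl | h | h)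
    · rfl
    · exact Quot.sound h
    · exact (Quot.sound h).symm

lemma waz_isOpenMap : IsOpenMap (Quot.mk wazRel : ((ℝ × ℝ) ⊕ (ℝ × ℝ)) → WazSurface) := by
  intro U hU
  rw [← isQuotientMap_quot_mk.isOpen_preimage]
  rw [isOpen_sum_iff]
  constructor
  · have : Sum.inl ⁻¹' (Quot.mk wazRel ⁻¹' (Quot.mk wazRel '' U)) =
        (Sum.inl ⁻¹' U) ∪ ({p : ℝ × ℝ | p.2 < 0} ∩ wazGlue ⁻¹' (Sum.inr ⁻¹' U)) := by
      ext p
      simp only [Set.mem_preimage, Set.mem_image, Set.mem_union, Set.mem_inter_iff,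
        Set.mem_setOf_eq]
      constructor
      · rintro ⟨b, hb, hq⟩
        rcases quot_mk_eq_iff.mp hq with rfl | h | h
        · exact Or.inl hb
        · obtain ⟨q, _, _, hc⟩ := wazRel_iff.mp h
          exact absurd hc (by simp)
        · obtain ⟨q, hq2, hb2, hinl⟩ := wazRel_iff.mp h
          obtain rfl : p = q := Sum.inl.inj hb2
          rw [hinl] at hb
          exact Or.inr ⟨hq2, hb⟩
      · rintro (h | ⟨h1, h2⟩)
        · exact ⟨Sum.inl p, h, rfl⟩
        · exact ⟨Sum.inr (wazGlue p), h2,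
            (quot_mk_eq_iff.mpr (Or.inr (Or.inr (wazRel_iff.mpr ⟨p, h1, rfl, rfl⟩))))⟩
    rw [this]
    exact ((isOpen_sum_iff.mp hU).1).union
      (continuousOn_wazGlue.isOpen_inter_preimage isOpen_lower (isOpen_sum_iff.mp hU).2)
  · have : Sum.inr ⁻¹' (Quot.mk wazRel ⁻¹' (Quot.mk wazRel '' U)) =
        (Sum.inr ⁻¹' U) ∪ ({p : ℝ × ℝ | p.2 < 0} ∩ wazInv ⁻¹' (Sum.inl ⁻¹' U)) := by
      ext p
      simp only [Set.mem_preimage, Set.mem_image, Set.mem_union, Set.mem_inter_iff,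
        Set.mem_setOf_eq]
      constructor
      · rintro ⟨b, hb, hq⟩
        rcases quot_mk_eq_iff.mp hq with rfl | h | h
        · exact Or.inl hb
        · obtain ⟨q, hq2, hb2, hinr⟩ := wazRel_iff.mp h
          obtain rfl : p = wazGlue q := Sum.inr.inj hinr
          rw [hb2] at hb
          refine Or.inr ⟨?_, ?_⟩
          · show (wazGlue q).2 < 0
            simpa [wazGlue] using Odd.pow_neg ⟨1, by norm_num⟩ hq2
          · rw [wazInv_glue hq2]; exact hb
        · obtain ⟨q, _, hc, _⟩ := wazRel_iff.mp h
          exact absurd hc (by simp)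
      · rintro (h | ⟨h1, h2⟩)
        · exact ⟨Sum.inr p, h, rfl⟩
        · refine ⟨Sum.inl (wazInv p), h2, quot_mk_eq_iff.mpr (Or.inr (Or.inl
            (wazRel_iff.mpr ⟨wazInv p, wazInv_snd_lt h1, rfl, by rw [wazGlue_wazInv h1]⟩)))⟩
    rw [this]
    exact ((isOpen_sum_iff.mp hU).2).union
      (continuousOn_wazInv.isOpen_inter_preimage isOpen_lower (isOpen_sum_iff.mp hU).1)

lemma range_homeo {X Y : Type*} [TopologicalSpace X] [TopologicalSpace Y] {f : X → Y}
    (hc : Continuous f) (ho : IsOpenMap f) (hi : Function.Injective f) :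
    Nonempty ((Set.range f : Set Y) ≃ₜ X) := by
  refine ⟨(Equiv.toHomeomorphOfContinuousOpen (Equiv.ofInjective f hi) ?_ ?_).symm⟩
  · exact Continuous.subtype_mk hc _
  · intro V hV
    have h : (Equiv.ofInjective f hi) '' V = Subtype.val ⁻¹' (f '' V) := by
      ext ⟨y, hy⟩
      simp only [Set.mem_image, Set.mem_preimage, Equiv.ofInjective_apply, Subtype.ext_iff]
    rw [h]
    exact (ho V hV).preimage continuous_subtype_val

lemma chart1_inj : Function.Injective (fun p : ℝ × ℝ => Quot.mk wazRel (Sum.inl p)) := by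
  intro p q h
  rcases quot_mk_eq_iff.mp h with h' | h' | h'
  · exact Sum.inl.inj h'
  · obtain ⟨r, _, _, hc⟩ := wazRel_iff.mp h'; exact absurd hc (by simp)
  · obtain ⟨r, _, _, hc⟩ := wazRel_iff.mp h'; exact absurd hc (by simp)

lemma chart2_inj : Function.Injective (fun p : ℝ × ℝ => Quot.mk wazRel (Sum.inr p)) := by
  intro p q h
  rcases quot_mk_eq_iff.mp h with h' | h' | h'
  · exact Sum.inr.inj h'
  · obtain ⟨r, _, hc, _⟩ := wazRel_iff.mp h'; exact absurd hc (by simp)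
  · obtain ⟨r, _, hc, _⟩ := wazRel_iff.mp h'; exact absurd hc (by simp)

lemma waz_manifold : IsTopManifold2 WazSurface := by
  intro x
  obtain ⟨a, rfl⟩ := Quot.exists_rep x
  have hopen := waz_isOpenMap
  cases a with
  | inl p =>
    refine ⟨Set.range (fun q : ℝ × ℝ => Quot.mk wazRel (Sum.inl q)), ?_, ⟨p, rfl⟩, ?_⟩
    · have h : Set.range (fun q : ℝ × ℝ => Quot.mk wazRel (Sum.inl q)) =
          Quot.mk wazRel '' Set.range Sum.inl := by
        rw [← Set.range_comp]; rfl
      exact h ▸ hopen _ isOpen_range_inl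
    · exact range_homeo (continuous_quot_mk.comp continuous_inl)
        (hopen.comp isOpenMap_inl) chart1_inj
  | inr p =>
    refine ⟨Set.range (fun q : ℝ × ℝ => Quot.mk wazRel (Sum.inr q)), ?_, ⟨p, rfl⟩, ?_⟩
    · have h : Set.range (fun q : ℝ × ℝ => Quot.mk wazRel (Sum.inr q)) =
          Quot.mk wazRel '' Set.range Sum.inr := by
        rw [← Set.range_comp]; rfl
      exact h ▸ hopen _ isOpen_range_inr
    · exact range_homeo (continuous_quot_mk.comp continuous_inr)
        (hopen.comp isOpenMap_inr) chart2_inj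

lemma waz_contDiffOn : ContDiffOn ℝ (⊤ : ℕ∞) wazGlue {p : ℝ × ℝ | p.2 < 0} := by
  apply ContDiffOn.prodMk
  · exact contDiff_fst.contDiffOn.add
      (contDiffOn_const.div contDiff_snd.contDiffOn fun p hp => ne_of_lt hp)
  · exact (contDiff_snd.pow 3).contDiffOn

/-! ### Leaf space -/

def leafTo : ((ℝ × ℝ) ⊕ (ℝ × ℝ)) → Quot cubedRel :=
  Sum.elim (fun p => Quot.mk _ (Sum.inl p.2)) (fun p => Quot.mk _ (Sum.inr p.2))

lemma leafTo_resp : ∀ a b, wazLeafRel a b → leafTo a = leafTo b := by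
  rintro a b (h | ⟨x, x', y, rfl, rfl⟩ | ⟨x, x', y, rfl, rfl⟩)
  · obtain ⟨x, y, hy, rfl, rfl⟩ := h
    exact Quot.sound ⟨y, hy, rfl, rfl⟩
  · rfl
  · rfl

def leafFrom : (ℝ ⊕ ℝ) → WazLeafSpace :=
  Sum.elim (fun y => Quot.mk wazLeafRel (Sum.inl (0, y)))
    (fun y => Quot.mk wazLeafRel (Sum.inr (0, y)))

lemma leafFrom_resp : ∀ a b, cubedRel a b → leafFrom a = leafFrom b := by
  rintro a b ⟨y, hy, rfl, rfl⟩
  show Quot.mk wazLeafRel (Sum.inl (0, y)) = Quot.mk wazLeafRel (Sum.inr (0, y ^ 3))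
  calc Quot.mk wazLeafRel (Sum.inl (0, y))
      = Quot.mk wazLeafRel (Sum.inr (0 + 1 / y, y ^ 3)) :=
        Quot.sound (Or.inl ⟨0, y, hy, rfl, rfl⟩)
    _ = Quot.mk wazLeafRel (Sum.inr (0, y ^ 3)) :=
        Quot.sound (Or.inr (Or.inr ⟨0 + 1 / y, 0, y ^ 3, rfl, rfl⟩))

noncomputable def leafEquiv : WazLeafSpace ≃ Quot cubedRel where
  toFun := Quot.lift leafTo leafTo_resp
  invFun := Quot.lift leafFrom leafFrom_resp
  left_inv := by
    apply Quot.ind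
    rintro (⟨x, y⟩ | ⟨x, y⟩)
    · exact Quot.sound (Or.inr (Or.inl ⟨0, x, y, rfl, rfl⟩))
    · exact Quot.sound (Or.inr (Or.inr ⟨0, x, y, rfl, rfl⟩))
  right_inv := by
    apply Quot.ind
    rintro (y | y) <;> rfl

lemma leafEquiv_continuous : Continuous leafEquiv := by
  apply continuous_quot_lift
  apply Continuous.sumElim
  · exact continuous_quot_mk.comp (continuous_inl.comp continuous_snd)
  · exact continuous_quot_mk.comp (continuous_inr.comp continuous_snd)

lemma leafEquiv_symm_continuous : Continuous leafEquiv.symm := by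
  apply continuous_quot_lift
  apply Continuous.sumElim
  · exact continuous_quot_mk.comp
      (continuous_inl.comp (Continuous.prodMk continuous_const continuous_id))
  · exact continuous_quot_mk.comp
      (continuous_inr.comp (Continuous.prodMk continuous_const continuous_id))

noncomputable def leafHomeo : WazLeafSpace ≃ₜ Quot cubedRel :=
  ⟨leafEquiv, leafEquiv_continuous, leafEquiv_symm_continuous⟩

/-- Gluing two copies of `ℝ²` by `(x, y) ↦ (x + 1/y, y³)` for `y < 0` yields an open
quotient which is a 2-manifold; the gluing map is a smooth injection sending
horizontal lines to horizontal lines, and the leaf space of the induced horizontal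
foliation is the simple branching with the cubed structure. -/
theorem waz_surface_leafSpace :
    IsOpenMap (Quot.mk wazRel : ((ℝ × ℝ) ⊕ (ℝ × ℝ)) → WazSurface) ∧
    IsTopManifold2 WazSurface ∧
    ContDiffOn ℝ (⊤ : ℕ∞) wazGlue {p : ℝ × ℝ | p.2 < 0} ∧
    Set.InjOn wazGlue {p : ℝ × ℝ | p.2 < 0} ∧
    (∀ p : ℝ × ℝ, p.2 < 0 → (wazGlue p).2 = p.2 ^ 3) ∧
    ∃ e : WazLeafSpace ≃ₜ Quot cubedRel,
      (∀ x y : ℝ, e (Quot.mk _ (Sum.inl (x, y))) = Quot.mk _ (Sum.inl y)) ∧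
      (∀ x y : ℝ, e (Quot.mk _ (Sum.inr (x, y))) = Quot.mk _ (Sum.inr y)) := by
  refine ⟨waz_isOpenMap, waz_manifold, waz_contDiffOn, fun p _ q _ h => wazGlue_inj h,
    fun p _ => rfl, leafHomeo, fun x y => rfl, fun x y => rfl⟩
end
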